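/- arXiv:1508.02975 — 7 statements merged into one kernel-verified Lean document; each statement's English description precedes it below -/
import Mathlib

section
/- If σ ≤ τ in the componentwise order on zero-count vectors (c_i(σ) ≤ c_i(τ) for all i, where c_i(σ) = #{k ≤ i : σ(k) > σ(i+1)}), then σ ≤ τ in the strong Bruhat order on S_n. Consequently, the product-of-chains order on S_n given by these vectors lies between the weak order and the strong Bruhat order. -/
/-- The zero-count vector of `σ` at position `p`. -/
def cCount {n : ℕ} (σ : Equiv.Perm (Fin n)) (p : Fin n) : ℕ :=
  (Finset.univ.filter (fun k : Fin n => k < p ∧ σ p < σ k)).card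

/-- Inversion number of a permutation. -/
def invCount {n : ℕ} (σ : Equiv.Perm (Fin n)) : ℕ :=
  (Finset.univ.filter (fun q : Fin n × Fin n => q.1 < q.2 ∧ σ q.2 < σ q.1)).card

/-- Covering relation of the strong Bruhat order: `τ = σ·(transposition)` with exactly one
more inversion. -/
def bruhatCov {n : ℕ} (σ τ : Equiv.Perm (Fin n)) : Prop :=
  (∃ a b : Fin n, a ≠ b ∧ τ = σ * Equiv.swap a b) ∧ invCount τ = invCount σ + 1

/-- Covering relation of the weak order: swap the values `m` and `m+1` where `m` occurs
before `m+1` in `σ`. -/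
def weakCov {n : ℕ} (σ τ : Equiv.Perm (Fin n)) : Prop :=
  ∃ m m' : Fin n, m'.val = m.val + 1 ∧ σ⁻¹ m < σ⁻¹ m' ∧ τ = Equiv.swap m m' * σ

theorem Equiv.Perm.apply_inv_self {α : Type*} (f : Equiv.Perm α) (x : α) : f (f⁻¹ x) = x := by
  simp

theorem Equiv.Perm.inv_apply_self {α : Type*} (f : Equiv.Perm α) (x : α) : f⁻¹ (f x) = x := by
  simp

lemma invCount_eq_sum {n : ℕ} (σ : Equiv.Perm (Fin n)) :
    invCount σ = ∑ p : Fin n, cCount σ p := by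
  classical
  rw [invCount, Finset.card_eq_sum_card_fiberwise
    (f := fun q : Fin n × Fin n => q.2) (t := Finset.univ) (fun _ _ => Finset.mem_univ _)]
  refine Finset.sum_congr rfl fun p _ => ?_
  rw [cCount]
  apply Finset.card_bij (fun q _ => q.1)
  · intro q hq
    simp only [Finset.mem_filter, Finset.mem_univ, true_and] at hq ⊢
    obtain ⟨⟨h1, h2⟩, h3⟩ := hq
    subst h3; exact ⟨h1, h2⟩
  · intro q1 h1 q2 h2 h
    simp only [Finset.mem_filter] at h1 h2
    exact Prod.ext h (h1.2.trans h2.2.symm)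
  · intro k hk
    simp only [Finset.mem_filter, Finset.mem_univ, true_and] at hk
    exact ⟨(k, p), by simp [hk], rfl⟩

lemma cCount_eq_val {n : ℕ} (σ : Equiv.Perm (Fin n)) (p : Fin n) :
    cCount σ p = (Finset.univ.filter (fun s : Fin n => σ⁻¹ s ≤ p ∧ σ p < s)).card := by
  rw [cCount]
  apply Finset.card_bij (fun k _ => σ k)
  · intro k hk
    simp only [Finset.mem_filter, Finset.mem_univ, true_and] at hk ⊢
    exact ⟨by simp [le_of_lt hk.1], hk.2⟩
  · intro k1 _ k2 _ h
    exact σ.injective h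
  · intro s hs
    simp only [Finset.mem_filter, Finset.mem_univ, true_and] at hs
    refine ⟨σ⁻¹ s, ?_, by simp⟩
    simp only [Finset.mem_filter, Finset.mem_univ, true_and, Equiv.Perm.apply_inv_self]
    refine ⟨lt_of_le_of_ne hs.1 ?_, hs.2⟩
    intro hh
    have hs2 := hs.2
    rw [show s = σ p from by rw [← hh, Equiv.Perm.apply_inv_self]] at hs2
    exact lt_irrefl _ hs2

lemma aux_lt {n : ℕ} (σ τ : Equiv.Perm (Fin n)) (p : Fin n)
    (hagree : ∀ q, p < q → σ q = τ q) (hlt : σ p < τ p) :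
    cCount τ p < cCount σ p := by
  have hpos : ∀ s : Fin n, σ⁻¹ s ≤ p ↔ τ⁻¹ s ≤ p := by
    intro s
    constructor
    · intro h
      by_contra hc
      push_neg at hc
      have h1 := hagree _ hc
      rw [Equiv.Perm.apply_inv_self] at h1
      have h2 : σ⁻¹ s = τ⁻¹ s := by
        apply σ.injective; rw [h1, Equiv.Perm.apply_inv_self]
      rw [← h2] at hc
      exact absurd h (not_le.mpr hc)
    · intro h
      by_contra hc
      push_neg at hc
      have h1 := (hagree _ hc).symm
      rw [Equiv.Perm.apply_inv_self] at h1
      have h2 : τ⁻¹ s = σ⁻¹ s := by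
        apply τ.injective; rw [h1, Equiv.Perm.apply_inv_self]
      rw [← h2] at hc
      exact absurd h (not_le.mpr hc)
  rw [cCount_eq_val, cCount_eq_val]
  apply Finset.card_lt_card
  rw [Finset.ssubset_iff_of_subset]
  · refine ⟨τ p, ?_, ?_⟩
    · simp only [Finset.mem_filter, Finset.mem_univ, true_and]
      exact ⟨(hpos (τ p)).mpr (by simp), hlt⟩
    · simp only [Finset.mem_filter, Finset.mem_univ, true_and, not_and]
      intro _
      exact lt_irrefl _
  · intro s hs
    simp only [Finset.mem_filter, Finset.mem_univ, true_and] at hs ⊢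
    exact ⟨(hpos s).mpr hs.1, lt_trans hlt hs.2⟩

lemma code_inj {n : ℕ} (σ τ : Equiv.Perm (Fin n)) (h : ∀ p, cCount σ p = cCount τ p) :
    σ = τ := by
  by_contra hne
  have hne' : (Finset.univ.filter (fun p : Fin n => σ p ≠ τ p)).Nonempty := by
    rw [Finset.filter_nonempty_iff]
    by_contra hc
    push_neg at hc
    exact hne (Equiv.ext fun p => hc p (Finset.mem_univ p))
  obtain ⟨p, hp, hmax⟩ := Finset.exists_max_image _ id hne'
  simp only [Finset.mem_filter, Finset.mem_univ, true_and] at hp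
  have hagree : ∀ q, p < q → σ q = τ q := by
    intro q hq
    by_contra hc
    have := hmax q (by simp [hc])
    simp only [id] at this
    exact absurd hq (not_lt.mpr this)
  rcases lt_trichotomy (σ p) (τ p) with hlt | heq | hgt
  · exact absurd (h p) (ne_of_gt (aux_lt σ τ p hagree hlt))
  · exact hp heq
  · exact absurd (h p) (ne_of_lt (aux_lt τ σ p (fun q hq => (hagree q hq).symm) hgt))

lemma step_cCount {n : ℕ} (σ : Equiv.Perm (Fin n)) (p0 j : Fin n)
    (hjp : j < p0) (hju : σ j < σ p0)
    (hmax : ∀ k, k < p0 → σ k < σ p0 → σ k ≤ σ j) :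
    (∀ q, q ≠ p0 → cCount (σ * Equiv.swap j p0) q = cCount σ q) ∧
    cCount (σ * Equiv.swap j p0) p0 = cCount σ p0 + 1 := by
  set σ' := σ * Equiv.swap j p0 with hσ'
  have hne : j ≠ p0 := ne_of_lt hjp
  have e1 : σ' j = σ p0 := by
    simp [hσ', Equiv.Perm.mul_apply, Equiv.swap_apply_left]
  have e2 : σ' p0 = σ j := by
    simp [hσ', Equiv.Perm.mul_apply, Equiv.swap_apply_right]
  have e3 : ∀ k, k ≠ j → k ≠ p0 → σ' k = σ k := fun k h1 h2 => by
    simp [hσ', Equiv.Perm.mul_apply, Equiv.swap_apply_of_ne_of_ne h1 h2]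
  have hval : ∀ k, k < p0 → k ≠ j → (σ j < σ k ↔ σ p0 < σ k) := by
    intro k hk hkj
    constructor
    · intro h
      rcases lt_trichotomy (σ k) (σ p0) with h1 | h1 | h1
      · exact absurd (hmax k hk h1) (not_le.mpr h)
      · exact absurd (σ.injective h1) (ne_of_lt hk)
      · exact h1
    · intro h
      exact lt_trans hju h
  constructor
  · intro q hq
    rcases lt_trichotomy q p0 with hqp | hqp | hqp
    · -- q < p0
      rcases eq_or_ne q j with rfl | hqj
      · unfold cCount
        congr 1
        ext k
        simp only [Finset.mem_filter, Finset.mem_univ, true_and]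
        constructor
        · rintro ⟨hk, h2⟩
          rw [e1] at h2
          rw [e3 k (ne_of_lt hk) (ne_of_lt (lt_trans hk hjp))] at h2
          exact ⟨hk, (hval k (lt_trans hk hjp) (ne_of_lt hk)).mpr h2⟩
        · rintro ⟨hk, h2⟩
          rw [e1, e3 k (ne_of_lt hk) (ne_of_lt (lt_trans hk hjp))]
          exact ⟨hk, (hval k (lt_trans hk hjp) (ne_of_lt hk)).mp h2⟩
      · unfold cCount
        congr 1
        ext k
        simp only [Finset.mem_filter, Finset.mem_univ, true_and]
        have hq' : σ' q = σ q := e3 q hqj hq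
        constructor
        · rintro ⟨hk, h2⟩
          rw [hq'] at h2
          refine ⟨hk, ?_⟩
          rcases eq_or_ne k j with rfl | hkj
          · rw [e1] at h2
            exact lt_of_le_of_ne (hmax q hqp h2) (fun h => hqj (σ.injective h))
          · rwa [e3 k hkj (ne_of_lt (lt_trans hk hqp))] at h2
        · rintro ⟨hk, h2⟩
          rw [hq']
          refine ⟨hk, ?_⟩
          rcases eq_or_ne k j with rfl | hkj
          · rw [e1]
            exact lt_trans h2 hju
          · rwa [e3 k hkj (ne_of_lt (lt_trans hk hqp))]
    · exact absurd hqp hq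
    · -- p0 < q
      unfold cCount
      apply Finset.card_bij (fun k _ => Equiv.swap j p0 k)
      · intro k hk
        simp only [Finset.mem_filter, Finset.mem_univ, true_and] at hk ⊢
        obtain ⟨hk1, hk2⟩ := hk
        constructor
        · rcases eq_or_ne k j with rfl | h1
          · rw [Equiv.swap_apply_left]; exact hqp
          · rcases eq_or_ne k p0 with rfl | h2
            · rw [Equiv.swap_apply_right]; exact lt_trans hjp hqp
            · rwa [Equiv.swap_apply_of_ne_of_ne h1 h2]
        · have : σ (Equiv.swap j p0 k) = σ' k := by
            simp [hσ', Equiv.Perm.mul_apply]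
          rw [this]
          rwa [e3 q (fun h => (ne_of_lt (lt_trans hjp hqp)) h.symm)
            (fun h => (ne_of_lt hqp) h.symm)] at hk2
      · intro k1 _ k2 _ h
        exact (Equiv.swap j p0).injective h
      · intro k hk
        simp only [Finset.mem_filter, Finset.mem_univ, true_and] at hk
        obtain ⟨hk1, hk2⟩ := hk
        refine ⟨Equiv.swap j p0 k, ?_, by simp⟩
        simp only [Finset.mem_filter, Finset.mem_univ, true_and]
        constructor
        · rcases eq_or_ne k j with rfl | h1
          · rw [Equiv.swap_apply_left]; exact hqp
          · rcases eq_or_ne k p0 with rfl | h2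
            · rw [Equiv.swap_apply_right]; exact lt_trans hjp hqp
            · rwa [Equiv.swap_apply_of_ne_of_ne h1 h2]
        · have hq' : σ' q = σ q :=
            e3 q (fun h => (ne_of_lt (lt_trans hjp hqp)) h.symm)
              (fun h => (ne_of_lt hqp) h.symm)
          have : σ' (Equiv.swap j p0 k) = σ k := by
            simp [hσ', Equiv.Perm.mul_apply]
          rw [hq', this]
          exact hk2
  · -- q = p0
    unfold cCount
    have hins : (Finset.univ.filter (fun k : Fin n => k < p0 ∧ σ' p0 < σ' k)) =
        insert j (Finset.univ.filter (fun k : Fin n => k < p0 ∧ σ p0 < σ k)) := by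
      ext k
      simp only [Finset.mem_insert, Finset.mem_filter, Finset.mem_univ, true_and]
      constructor
      · rintro ⟨hk, h2⟩
        rcases eq_or_ne k j with rfl | hkj
        · exact Or.inl rfl
        · rw [e2, e3 k hkj (ne_of_lt hk)] at h2
          exact Or.inr ⟨hk, (hval k hk hkj).mp h2⟩
      · rintro (rfl | ⟨hk, h2⟩)
        · rw [e2, e1]
          exact ⟨hjp, hju⟩
        · have hkj : k ≠ j := by
            intro h; rw [h] at h2; exact absurd (lt_trans hju h2) (lt_irrefl _)
          rw [e2, e3 k hkj (ne_of_lt hk)]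
          exact ⟨hk, (hval k hk hkj).mpr h2⟩
    rw [hins, Finset.card_insert_of_notMem]
    simp only [Finset.mem_filter, Finset.mem_univ, true_and, not_and]
    intro _
    exact not_lt.mpr (le_of_lt hju)

lemma part1aux {n : ℕ} : ∀ (N : ℕ) (σ τ : Equiv.Perm (Fin n)),
    (∀ p, cCount σ p ≤ cCount τ p) →
    ((∑ p, cCount τ p) - (∑ p, cCount σ p) = N) →
    Relation.ReflTransGen bruhatCov σ τ := by
  intro N
  induction N using Nat.strong_induction_on with
  | _ N ih =>
    intro σ τ h hN
    by_cases hstrict : ∃ p0, cCount σ p0 < cCount τ p0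
    · obtain ⟨p0, hp0⟩ := hstrict
      -- find a position j < p0 with σ j < σ p0 and σ j maximal
      have hTne : (Finset.univ.filter (fun k : Fin n => k < p0 ∧ σ k < σ p0)).Nonempty := by
        by_contra hc
        rw [Finset.not_nonempty_iff_eq_empty, Finset.filter_eq_empty_iff] at hc
        have hsub : (Finset.univ.filter (fun k : Fin n => k < p0 ∧ τ p0 < τ k)) ⊆
            (Finset.univ.filter (fun k : Fin n => k < p0 ∧ σ p0 < σ k)) := by
          intro k hk
          simp only [Finset.mem_filter, Finset.mem_univ, true_and] at hk ⊢
          refine ⟨hk.1, ?_⟩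
          have h4 := hc (Finset.mem_univ k)
          push_neg at h4
          have h5 : σ p0 ≤ σ k := not_lt.mp (fun hlt => (h4 hk.1).not_gt hlt)
          exact lt_of_le_of_ne h5 (fun hh => (ne_of_lt hk.1) (σ.injective hh.symm))
        have : cCount τ p0 ≤ cCount σ p0 := Finset.card_le_card hsub
        omega
      obtain ⟨j, hjT, hjmax⟩ := Finset.exists_max_image _ σ hTne
      simp only [Finset.mem_filter, Finset.mem_univ, true_and] at hjT
      have hmax : ∀ k, k < p0 → σ k < σ p0 → σ k ≤ σ j := by
        intro k h1 h2
        exact hjmax k (by simp [h1, h2])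
      obtain ⟨hother, hbump⟩ := step_cCount σ p0 j hjT.1 hjT.2 hmax
      set σ' := σ * Equiv.swap j p0 with hσ'
      have hle' : ∀ p, cCount σ' p ≤ cCount τ p := by
        intro p
        rcases eq_or_ne p p0 with rfl | hp
        · rw [hbump]; omega
        · rw [hother p hp]; exact h p
      have hsum : ∑ p, cCount σ' p = (∑ p, cCount σ p) + 1 := by
        have h1 := Finset.add_sum_erase Finset.univ (cCount σ') (Finset.mem_univ p0)
        have h2 := Finset.add_sum_erase Finset.univ (cCount σ) (Finset.mem_univ p0)
        have h3 : ∑ x ∈ Finset.univ.erase p0, cCount σ' x =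
            ∑ x ∈ Finset.univ.erase p0, cCount σ x :=
          Finset.sum_congr rfl (fun p hp => hother p (Finset.ne_of_mem_erase hp))
        omega
      have hstrictsum : (∑ p, cCount σ p) < ∑ p, cCount τ p :=
        Finset.sum_lt_sum (fun p _ => h p) ⟨p0, Finset.mem_univ p0, hp0⟩
      have hcov : bruhatCov σ σ' := by
        refine ⟨⟨j, p0, ne_of_lt hjT.1, rfl⟩, ?_⟩
        rw [invCount_eq_sum, invCount_eq_sum, hsum]
      exact Relation.ReflTransGen.head hcov
        (ih (N - 1) (by omega) σ' τ hle' (by omega))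
    · push_neg at hstrict
      have : σ = τ := code_inj σ τ (fun p => le_antisymm (h p) (hstrict p))
      rw [this]

lemma weak_mono {n : ℕ} {σ τ : Equiv.Perm (Fin n)} (hw : weakCov σ τ) :
    ∀ p, cCount σ p ≤ cCount τ p := by
  obtain ⟨m, m', hm, hab, rfl⟩ := hw
  intro p
  apply Finset.card_le_card
  intro k hk
  simp only [Finset.mem_filter, Finset.mem_univ, true_and] at hk ⊢
  obtain ⟨hk1, hk2⟩ := hk
  refine ⟨hk1, ?_⟩
  have happ : ∀ x, (Equiv.swap m m' * σ) x = Equiv.swap m m' (σ x) := fun x => rfl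
  rw [happ, happ]
  have hexc : ¬(σ p = m ∧ σ k = m') := by
    rintro ⟨h1, h2⟩
    have hp : p = σ⁻¹ m := by rw [← h1, Equiv.Perm.inv_apply_self]
    have hk' : k = σ⁻¹ m' := by rw [← h2, Equiv.Perm.inv_apply_self]
    rw [hp, hk'] at hk1
    exact absurd (lt_trans hk1 hab) (lt_irrefl _)
  have hmm' : m < m' := by rw [Fin.lt_def]; omega
  rcases eq_or_ne (σ p) m with hxm | hxm
  · rw [hxm, Equiv.swap_apply_left]
    rw [hxm] at hk2
    have hym' : σ k ≠ m' := fun h => hexc ⟨hxm, h⟩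
    have hym : σ k ≠ m := ne_of_gt hk2
    rw [Equiv.swap_apply_of_ne_of_ne hym hym']
    have hv : (σ k).val ≠ m'.val := fun h => hym' (Fin.ext h)
    rw [Fin.lt_def] at hk2 ⊢
    omega
  · rcases eq_or_ne (σ p) m' with hxm' | hxm'
    · rw [hxm', Equiv.swap_apply_right]
      rw [hxm'] at hk2
      have hym : σ k ≠ m := ne_of_gt (lt_trans hmm' hk2)
      have hym' : σ k ≠ m' := ne_of_gt hk2
      rw [Equiv.swap_apply_of_ne_of_ne hym hym']
      rw [Fin.lt_def] at hk2 ⊢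
      omega
    · rw [Equiv.swap_apply_of_ne_of_ne hxm hxm']
      rcases eq_or_ne (σ k) m with hym | hym
      · rw [hym, Equiv.swap_apply_left]
        rw [hym] at hk2
        rw [Fin.lt_def] at hk2 ⊢
        omega
      · rcases eq_or_ne (σ k) m' with hym' | hym'
        · rw [hym', Equiv.swap_apply_right]
          rw [hym'] at hk2
          have hv : (σ p).val ≠ m.val := fun h => hxm (Fin.ext h)
          rw [Fin.lt_def] at hk2 ⊢
          omega
        · rw [Equiv.swap_apply_of_ne_of_ne hym hym']
          exact hk2

/-- If `σ ≤ τ` in the componentwise order on zero-count vectors then `σ ≤ τ` in the strong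
Bruhat order; moreover the componentwise order contains the weak order.  Hence the
product-of-chains order lies between the weak and strong Bruhat orders. -/
theorem stmt7 (n : ℕ) :
    (∀ σ τ : Equiv.Perm (Fin n), (∀ p, cCount σ p ≤ cCount τ p) →
      Relation.ReflTransGen bruhatCov σ τ) ∧
    (∀ σ τ : Equiv.Perm (Fin n), Relation.ReflTransGen weakCov σ τ →
      ∀ p, cCount σ p ≤ cCount τ p) := by
  constructor
  · intro σ τ h
    exact part1aux _ σ τ h rfl
  · intro σ τ h
    induction h with
    | refl => exact fun p => le_refl _
    | tail _ h2 ih => exact fun p => le_trans (ih p) (weak_mono h2 p)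
end

section
/- The number of bracket vectors of order n, i.e., sequences (x_1,...,x_n) of positive integers with i ≤ x_i ≤ n such that i ≤ j ≤ x_i implies x_j ≤ x_i, equals the n-th Catalan number. -/
def Cond (n : ℕ) (x : Fin n → Fin (n+1)) : Prop :=
  (∀ i : Fin n, i.val + 1 ≤ (x i).val) ∧
  (∀ i j : Fin n, i ≤ j → j.val + 1 ≤ (x i).val → (x j).val ≤ (x i).val)

instance (n : ℕ) : DecidablePred (Cond n) := fun _ => by
  unfold Cond; infer_instance

def BV (n : ℕ) : Type := {x : Fin n → Fin (n+1) // Cond n x}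

instance (n : ℕ) : Fintype (BV n) := Subtype.fintype _

def Fmap (n : ℕ) (k : Fin (n+1)) (y : Fin k.val → Fin (k.val+1))
    (z : Fin (n - k.val) → Fin (n - k.val + 1)) : Fin (n+1) → Fin (n+2) := fun i =>
  if h0 : i.val = 0 then ⟨k.val + 1, by have := k.isLt; omega⟩
  else if h1 : i.val ≤ k.val then
    ⟨(y ⟨i.val - 1, by omega⟩).val + 1, by
      have := (y ⟨i.val - 1, by omega⟩).isLt; have := k.isLt; omega⟩
  else
    ⟨(z ⟨i.val - k.val - 1, by have := i.isLt; omega⟩).val + k.val + 1, by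
      have := (z ⟨i.val - k.val - 1, by have := i.isLt; omega⟩).isLt
      have := k.isLt; omega⟩

lemma Fmap_zero {n : ℕ} {k : Fin (n+1)} {y : Fin k.val → Fin (k.val+1)}
    {z : Fin (n - k.val) → Fin (n - k.val + 1)} {i : Fin (n+1)} (h0 : i.val = 0) :
    (Fmap n k y z i).val = k.val + 1 := by
  simp [Fmap, h0]

lemma Fmap_left {n : ℕ} {k : Fin (n+1)} {y : Fin k.val → Fin (k.val+1)}
    {z : Fin (n - k.val) → Fin (n - k.val + 1)} {i : Fin (n+1)}
    (h0 : ¬ i.val = 0) (h1 : i.val ≤ k.val) (hi : i.val - 1 < k.val) :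
    (Fmap n k y z i).val = (y ⟨i.val - 1, hi⟩).val + 1 := by
  simp [Fmap, h0, h1]

lemma Fmap_right {n : ℕ} {k : Fin (n+1)} {y : Fin k.val → Fin (k.val+1)}
    {z : Fin (n - k.val) → Fin (n - k.val + 1)} {i : Fin (n+1)}
    (h0 : ¬ i.val = 0) (h1 : ¬ i.val ≤ k.val) (hi : i.val - k.val - 1 < n - k.val) :
    (Fmap n k y z i).val = (z ⟨i.val - k.val - 1, hi⟩).val + k.val + 1 := by
  simp [Fmap, h0, h1]

lemma Fmap_cond {n : ℕ} {k : Fin (n+1)} {y : Fin k.val → Fin (k.val+1)}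
    {z : Fin (n - k.val) → Fin (n - k.val + 1)}
    (hy : Cond k.val y) (hz : Cond (n - k.val) z) : Cond (n+1) (Fmap n k y z) := by
  constructor
  · intro i
    by_cases h0 : i.val = 0
    · rw [Fmap_zero h0]; omega
    by_cases h1 : i.val ≤ k.val
    · have hi : i.val - 1 < k.val := by omega
      rw [Fmap_left h0 h1 hi]
      have h2 : i.val - 1 + 1 ≤ (y ⟨i.val - 1, hi⟩).val := hy.1 ⟨i.val - 1, hi⟩
      omega
    · have hi : i.val - k.val - 1 < n - k.val := by have := i.isLt; omega
      rw [Fmap_right h0 h1 hi]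
      have h2 : i.val - k.val - 1 + 1 ≤ (z ⟨i.val - k.val - 1, hi⟩).val :=
        hz.1 ⟨i.val - k.val - 1, hi⟩
      omega
  · intro i j hij hj
    rw [Fin.le_def] at hij
    by_cases hi0 : i.val = 0
    · rw [Fmap_zero hi0] at hj ⊢
      by_cases hj0 : j.val = 0
      · rw [Fmap_zero hj0]
      · have hj1 : j.val ≤ k.val := by omega
        have hjlt : j.val - 1 < k.val := by omega
        rw [Fmap_left hj0 hj1 hjlt]
        have := (y ⟨j.val - 1, hjlt⟩).isLt
        omega
    · by_cases hi1 : i.val ≤ k.val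
      · have hii : i.val - 1 < k.val := by omega
        rw [Fmap_left hi0 hi1 hii] at hj ⊢
        have hy2 := (y ⟨i.val - 1, hii⟩).isLt
        have hj0 : ¬ j.val = 0 := by omega
        have hj1 : j.val ≤ k.val := by omega
        have hjj : j.val - 1 < k.val := by omega
        rw [Fmap_left hj0 hj1 hjj]
        have h3 : (y ⟨j.val - 1, hjj⟩).val ≤ (y ⟨i.val - 1, hii⟩).val := by
          refine hy.2 ⟨i.val - 1, hii⟩ ⟨j.val - 1, hjj⟩ ?_ ?_
          · rw [Fin.mk_le_mk]; omega
          · show j.val - 1 + 1 ≤ (y ⟨i.val - 1, hii⟩).val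
            omega
        omega
      · have hii : i.val - k.val - 1 < n - k.val := by have := i.isLt; omega
        rw [Fmap_right hi0 hi1 hii] at hj ⊢
        have hj0 : ¬ j.val = 0 := by omega
        have hj1 : ¬ j.val ≤ k.val := by omega
        have hjj : j.val - k.val - 1 < n - k.val := by have := j.isLt; omega
        rw [Fmap_right hj0 hj1 hjj]
        have h3 : (z ⟨j.val - k.val - 1, hjj⟩).val ≤ (z ⟨i.val - k.val - 1, hii⟩).val := by
          refine hz.2 ⟨i.val - k.val - 1, hii⟩ ⟨j.val - k.val - 1, hjj⟩ ?_ ?_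
          · rw [Fin.mk_le_mk]; omega
          · show j.val - k.val - 1 + 1 ≤ (z ⟨i.val - k.val - 1, hii⟩).val
            omega
        omega

def F (n : ℕ) (p : Σ k : Fin (n+1), BV k.val × BV (n - k.val)) : BV (n+1) :=
  ⟨Fmap n p.1 p.2.1.val p.2.2.val, Fmap_cond p.2.1.2 p.2.2.2⟩

lemma F_inj (n : ℕ) : Function.Injective (F n) := by
  rintro ⟨k, ⟨y, hy⟩, ⟨z, hz⟩⟩ ⟨k', ⟨y', hy'⟩, ⟨z', hz'⟩⟩ h
  have h' : ∀ i, (Fmap n k y z i).val = (Fmap n k' y' z' i).val := fun i =>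
    congrArg Fin.val (congrFun (congrArg Subtype.val h) i)
  have h0 : ((0 : Fin (n+1))).val = 0 := by simp
  have hk : k = k' := by
    have := h' 0
    rw [Fmap_zero h0, Fmap_zero h0] at this
    exact Fin.ext (by omega)
  subst hk
  have hyy : y = y' := by
    funext j
    have hjn : j.val + 1 < n + 1 := by have := j.isLt; have := k.isLt; omega
    have := h' ⟨j.val + 1, hjn⟩
    have hne : ¬ (⟨j.val + 1, hjn⟩ : Fin (n+1)).val = 0 := by simp
    have hle : (⟨j.val + 1, hjn⟩ : Fin (n+1)).val ≤ k.val := j.isLt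
    have hlt : (⟨j.val + 1, hjn⟩ : Fin (n+1)).val - 1 < k.val := j.isLt
    rw [Fmap_left hne hle hlt, Fmap_left hne hle hlt] at this
    have hjeq : (⟨(⟨j.val + 1, hjn⟩ : Fin (n+1)).val - 1, hlt⟩ : Fin k.val) = j :=
      Fin.ext (by simp)
    rw [hjeq] at this
    exact Fin.ext (by omega)
  subst hyy
  have hzz : z = z' := by
    funext j
    have hjn : j.val + k.val + 1 < n + 1 := by have := j.isLt; omega
    have := h' ⟨j.val + k.val + 1, hjn⟩
    have hne : ¬ (⟨j.val + k.val + 1, hjn⟩ : Fin (n+1)).val = 0 := by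
      show ¬ j.val + k.val + 1 = 0; omega
    have hle : ¬ (⟨j.val + k.val + 1, hjn⟩ : Fin (n+1)).val ≤ k.val := by
      show ¬ j.val + k.val + 1 ≤ k.val; omega
    have hlt : (⟨j.val + k.val + 1, hjn⟩ : Fin (n+1)).val - k.val - 1 < n - k.val := by
      show j.val + k.val + 1 - k.val - 1 < n - k.val; have := j.isLt; omega
    rw [Fmap_right hne hle hlt, Fmap_right hne hle hlt] at this
    have hjeq : (⟨(⟨j.val + k.val + 1, hjn⟩ : Fin (n+1)).val - k.val - 1, hlt⟩
        : Fin (n - k.val)) = j := Fin.ext (by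
      show j.val + k.val + 1 - k.val - 1 = j.val; omega)
    rw [hjeq] at this
    exact Fin.ext (by omega)
  subst hzz
  rfl

lemma F_surj (n : ℕ) : Function.Surjective (F n) := by
  rintro ⟨x, hx⟩
  have hx0 : 1 ≤ (x 0).val := by have := hx.1 0; simpa using this
  have hxn := (x 0).isLt
  obtain ⟨K, hKeq⟩ : ∃ K, (x 0).val = K + 1 := ⟨(x 0).val - 1, by omega⟩
  have hK : K < n + 1 := by omega
  have hKv : ((⟨K, hK⟩ : Fin (n+1)) : ℕ) = K := rfl
  -- values in the left block are bounded by x 0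
  have hxle : ∀ i : Fin (n+1), i.val ≠ 0 → i.val ≤ K → (x i).val ≤ K + 1 := by
    intro i hi0 hi
    have h2 : (x i).val ≤ (x 0).val := hx.2 0 i (Fin.zero_le i) (by
      show i.val + 1 ≤ (x 0).val
      omega)
    omega
  have hyb : ∀ j : Fin K, j.val + 1 < n + 1 := fun j => by have := j.isLt; omega
  have hzb : ∀ j : Fin (n - K), j.val + K + 1 < n + 1 := fun j => by have := j.isLt; omega
  refine ⟨⟨⟨K, hK⟩,
    ⟨fun j => ⟨(x ⟨j.val + 1, hyb j⟩).val - 1, by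
        have h1 := hxle ⟨j.val + 1, hyb j⟩ (by simp) j.isLt
        have h2 : j.val + 1 + 1 ≤ (x ⟨j.val + 1, hyb j⟩).val := hx.1 ⟨j.val + 1, hyb j⟩
        omega⟩, ?_⟩,
    ⟨fun j => ⟨(x ⟨j.val + K + 1, hzb j⟩).val - K - 1, by
        have h1 := (x ⟨j.val + K + 1, hzb j⟩).isLt
        have h2 : j.val + K + 1 + 1 ≤ (x ⟨j.val + K + 1, hzb j⟩).val :=
          hx.1 ⟨j.val + K + 1, hzb j⟩
        omega⟩, ?_⟩⟩, ?_⟩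
  · -- Cond K y
    constructor
    · intro j
      have h2 : j.val + 1 + 1 ≤ (x ⟨j.val + 1, hyb j⟩).val := hx.1 ⟨j.val + 1, hyb j⟩
      show j.val + 1 ≤ (x ⟨j.val + 1, hyb j⟩).val - 1
      omega
    · intro i j hij hj
      rw [Fin.mk_le_mk] at hij
      have hj' : j.val + 1 + 1 ≤ (x ⟨i.val + 1, hyb i⟩).val := by
        have : j.val + 1 ≤ (x ⟨i.val + 1, hyb i⟩).val - 1 := hj
        have h2 : i.val + 1 + 1 ≤ (x ⟨i.val + 1, hyb i⟩).val := hx.1 ⟨i.val + 1, hyb i⟩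
        omega
      have h3 : (x ⟨j.val + 1, hyb j⟩).val ≤ (x ⟨i.val + 1, hyb i⟩).val :=
        hx.2 ⟨i.val + 1, hyb i⟩ ⟨j.val + 1, hyb j⟩ (by rw [Fin.mk_le_mk]; omega) hj'
      show (x ⟨j.val + 1, hyb j⟩).val - 1 ≤ (x ⟨i.val + 1, hyb i⟩).val - 1
      omega
  · -- Cond (n - K) z
    constructor
    · intro j
      have h2 : j.val + K + 1 + 1 ≤ (x ⟨j.val + K + 1, hzb j⟩).val :=
        hx.1 ⟨j.val + K + 1, hzb j⟩
      show j.val + 1 ≤ (x ⟨j.val + K + 1, hzb j⟩).val - K - 1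
      omega
    · intro i j hij hj
      rw [Fin.mk_le_mk] at hij
      have hj' : (j.val + K + 1) + 1 ≤ (x ⟨i.val + K + 1, hzb i⟩).val := by
        have : j.val + 1 ≤ (x ⟨i.val + K + 1, hzb i⟩).val - K - 1 := hj
        have h2 : i.val + K + 1 + 1 ≤ (x ⟨i.val + K + 1, hzb i⟩).val :=
          hx.1 ⟨i.val + K + 1, hzb i⟩
        omega
      have h3 : (x ⟨j.val + K + 1, hzb j⟩).val ≤ (x ⟨i.val + K + 1, hzb i⟩).val :=
        hx.2 ⟨i.val + K + 1, hzb i⟩ ⟨j.val + K + 1, hzb j⟩ (by rw [Fin.mk_le_mk]; omega) hj'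
      show (x ⟨j.val + K + 1, hzb j⟩).val - K - 1 ≤ (x ⟨i.val + K + 1, hzb i⟩).val - K - 1
      omega
  · -- F applied equals x
    apply Subtype.ext
    funext i
    apply Fin.ext
    show (Fmap n ⟨K, hK⟩ _ _ i).val = (x i).val
    by_cases h0 : i.val = 0
    · rw [Fmap_zero h0]
      have : i = 0 := Fin.ext (by simpa using h0)
      subst this
      omega
    · by_cases h1 : i.val ≤ K
      · have hii : i.val - 1 < K := by omega
        rw [Fmap_left h0 h1 hii]
        show (x ⟨(i.val - 1) + 1, _⟩).val - 1 + 1 = (x i).val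
        have hieq : (⟨(i.val - 1) + 1, hyb ⟨i.val - 1, hii⟩⟩ : Fin (n+1)) = i :=
          Fin.ext (by simp; omega)
        rw [hieq]
        have := hx.1 i
        omega
      · have hii : i.val - K - 1 < n - K := by have := i.isLt; omega
        rw [Fmap_right h0 h1 hii]
        show (x ⟨(i.val - K - 1) + K + 1, _⟩).val - K - 1 + K + 1 = (x i).val
        have hieq : (⟨(i.val - K - 1) + K + 1, hzb ⟨i.val - K - 1, hii⟩⟩ : Fin (n+1)) = i :=
          Fin.ext (by simp; omega)
        rw [hieq]
        have h2 : i.val + 1 ≤ (x i).val := hx.1 i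
        omega

lemma card_BV_succ (n : ℕ) :
    Fintype.card (BV (n+1)) =
      ∑ i : Fin (n+1), Fintype.card (BV i.val) * Fintype.card (BV (n - i.val)) := by
  rw [← Fintype.card_congr (Equiv.ofBijective (F n) ⟨F_inj n, F_surj n⟩)]
  rw [Fintype.card_sigma]
  simp [Fintype.card_prod]

lemma card_BV_zero : Fintype.card (BV 0) = 1 := by
  have : Unique (BV 0) := {
    default := ⟨fun i => i.elim0, ⟨fun i => i.elim0, fun i => i.elim0⟩⟩
    uniq := fun a => Subtype.ext (funext fun i => i.elim0) }
  exact Fintype.card_unique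

lemma key : ∀ n, Fintype.card (BV n) = catalan n := by
  intro n
  induction n using Nat.strong_induction_on with
  | _ n ih =>
    match n with
    | 0 => simpa using card_BV_zero
    | Nat.succ m =>
      rw [card_BV_succ, catalan_succ]
      refine Finset.sum_congr rfl fun i _ => ?_
      rw [ih i.val (by have := i.isLt; omega), ih (m - i.val) (by have := i.isLt; omega)]

/-- The number of bracket vectors of order `n`, i.e. sequences `(x_1,...,x_n)` of positive
integers with `i ≤ x_i ≤ n` (encoded as `x : Fin n → Fin (n+1)` with `i+1 ≤ x i`) such
that `i ≤ j ≤ x_i` implies `x_j ≤ x_i`, equals the `n`-th Catalan number. -/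
theorem stmt9 (n : ℕ) :
    Fintype.card {x : Fin n → Fin (n + 1) //
      (∀ i : Fin n, i.val + 1 ≤ (x i).val) ∧
      (∀ i j : Fin n, i ≤ j → j.val + 1 ≤ (x i).val → (x j).val ≤ (x i).val)} =
    catalan n := by
  rw [← key n]
  exact Fintype.card_congr (Equiv.refl _)
end

section
/- The induced subposet, on 213-avoiding permutations of {1,...,n}, of the componentwise order on zero-count vectors (σ ≤ τ iff c_i(σ) ≤ c_i(τ) for all i) is isomorphic to the poset of weakly increasing sequences (x_1,...,x_n) with i ≤ x_i ≤ n under reverse componentwise comparison (the Catalan distributive lattice). -/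
lemma cCount_le {n : ℕ} (σ : Equiv.Perm (Fin n)) (p : Fin n) : cCount σ p ≤ p.val := by
  have h1 : (Finset.univ.filter (fun k : Fin n => k < p ∧ σ p < σ k)) ⊆ Finset.Iio p := by
    intro k hk
    simp only [Finset.mem_filter] at hk
    simpa using hk.2.1
  have := Finset.card_le_card h1
  simpa [cCount, Fin.card_Iio] using this

lemma cCount_mono {n : ℕ} {σ : Equiv.Perm (Fin n)}
    (h : ¬ ∃ i j k : Fin n, i < j ∧ j < k ∧ σ j < σ i ∧ σ i < σ k)
    {p q : Fin n} (hpq : p ≤ q) : cCount σ p ≤ cCount σ q := by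
  apply Finset.card_le_card
  intro k hk
  simp only [Finset.mem_filter, Finset.mem_univ, true_and] at hk ⊢
  obtain ⟨hkp, hσ⟩ := hk
  refine ⟨lt_of_lt_of_le hkp hpq, ?_⟩
  rcases eq_or_lt_of_le hpq with rfl | hpq'
  · exact hσ
  · by_contra hle
    push_neg at hle
    have hkq : k ≠ q := ne_of_lt (lt_trans hkp hpq')
    have hlt : σ k < σ q := lt_of_le_of_ne hle (fun e => hkq (σ.injective e))
    exact h ⟨k, p, q, hkp, hpq', hσ, hlt⟩

lemma avoid_of_mono {n : ℕ} {σ : Equiv.Perm (Fin n)}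
    (h : ∀ p q : Fin n, p ≤ q → cCount σ p ≤ cCount σ q) :
    ¬ ∃ i j k : Fin n, i < j ∧ j < k ∧ σ j < σ i ∧ σ i < σ k := by
  classical
  rintro hex
  set K : Finset (Fin n) :=
    Finset.univ.filter (fun k => ∃ i j, i < j ∧ j < k ∧ σ j < σ i ∧ σ i < σ k) with hK
  have hKne : K.Nonempty := by
    obtain ⟨i, j, k, h1, h2, h3, h4⟩ := hex
    refine ⟨k, ?_⟩
    simp only [hK, Finset.mem_filter, Finset.mem_univ, true_and]
    exact ⟨i, j, h1, h2, h3, h4⟩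
  set k0 := K.min' hKne with hk0
  have hk0K : k0 ∈ K := K.min'_mem hKne
  simp only [hK, Finset.mem_filter, Finset.mem_univ, true_and] at hk0K
  obtain ⟨i0, j0, hij, hjk, hji, hik⟩ := hk0K
  have hcard : cCount σ k0 < cCount σ j0 := by
    apply Finset.card_lt_card
    constructor
    · intro m hm
      simp only [Finset.mem_filter, Finset.mem_univ, true_and] at hm ⊢
      obtain ⟨hmk, hσm⟩ := hm
      have hσj0m : σ j0 < σ m := lt_trans hji (lt_trans hik hσm)
      refine ⟨?_, hσj0m⟩
      by_contra hle
      push_neg at hle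
      have hj0m : j0 < m := lt_of_le_of_ne hle (by
        intro e; exact absurd hσj0m (by rw [e]; exact lt_irrefl _))
      have hmK : m ∈ K := by
        simp only [hK, Finset.mem_filter, Finset.mem_univ, true_and]
        exact ⟨i0, j0, hij, hj0m, hji, lt_trans hik hσm⟩
      exact absurd (K.min'_le m hmK) (not_le.2 hmk)
    · intro hsub
      have : i0 ∈ Finset.univ.filter (fun m => m < k0 ∧ σ k0 < σ m) := by
        apply hsub
        simp only [Finset.mem_filter, Finset.mem_univ, true_and]
        exact ⟨hij, hji⟩
      simp only [Finset.mem_filter, Finset.mem_univ, true_and] at this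
      exact absurd this.2 (not_lt.2 (le_of_lt hik))
  exact absurd (h j0 k0 (le_of_lt hjk)) (not_le.2 hcard)

lemma cCount_injective {n : ℕ} {σ τ : Equiv.Perm (Fin n)}
    (h : ∀ p, cCount σ p = cCount τ p) : σ = τ := by
  classical
  have key : ∀ p : ℕ, ∀ i j : Fin n, i.val ≤ p → j.val ≤ p → (σ i < σ j ↔ τ i < τ j) := by
    intro p
    induction p using Nat.strong_induction_on with
    | _ p IH =>
      have half : ∀ i j : Fin n, j.val = p → i < j → (σ j < σ i ↔ τ j < τ i) := by
        intro i j hj hij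
        set S := Finset.univ.filter (fun k => k < j ∧ σ j < σ k) with hS
        set T := Finset.univ.filter (fun k => k < j ∧ τ j < τ k) with hT
        have hcard : S.card = T.card := h j
        have hsub : S ⊆ T ∨ T ⊆ S := by
          by_contra hc
          push_neg at hc
          obtain ⟨s, hsS, hsT⟩ := Finset.not_subset.1 hc.1
          obtain ⟨t, htT, htS⟩ := Finset.not_subset.1 hc.2
          simp only [hS, hT, Finset.mem_filter, Finset.mem_univ, true_and, not_and] at hsS hsT htT htS
          obtain ⟨hsj, hσs⟩ := hsS
          obtain ⟨htj, hτt⟩ := htT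
          have hτs : τ s < τ j := by
            have h1 : ¬ τ j < τ s := hsT hsj
            have h2 : τ s ≠ τ j := fun e => (ne_of_lt hsj) (τ.injective e)
            exact lt_of_le_of_ne (not_lt.1 h1) h2
          have hσt : σ t < σ j := by
            have h1 : ¬ σ j < σ t := htS htj
            have h2 : σ t ≠ σ j := fun e => (ne_of_lt htj) (σ.injective e)
            exact lt_of_le_of_ne (not_lt.1 h1) h2
          have hστ : σ t < σ s := lt_trans hσt hσs
          have hτστ : τ s < τ t := lt_trans hτs hτt
          have hts : (σ t < σ s ↔ τ t < τ s) := by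
            refine IH (max s.val t.val) ?_ t s (le_max_right _ _) (le_max_left _ _)
            have h1 : s.val < p := by rw [← hj]; exact hsj
            have h2 : t.val < p := by rw [← hj]; exact htj
            omega
          exact absurd (hts.1 hστ) (not_lt.2 (le_of_lt hτστ))
        have hST : S = T := by
          rcases hsub with h' | h'
          · exact Finset.eq_of_subset_of_card_le h' hcard.ge
          · exact (Finset.eq_of_subset_of_card_le h' hcard.le).symm
        constructor
        · intro hlt
          have : i ∈ S := by
            simp only [hS, Finset.mem_filter, Finset.mem_univ, true_and]; exact ⟨hij, hlt⟩
          rw [hST] at this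
          simp only [hT, Finset.mem_filter, Finset.mem_univ, true_and] at this
          exact this.2
        · intro hlt
          have : i ∈ T := by
            simp only [hT, Finset.mem_filter, Finset.mem_univ, true_and]; exact ⟨hij, hlt⟩
          rw [← hST] at this
          simp only [hS, Finset.mem_filter, Finset.mem_univ, true_and] at this
          exact this.2
      intro i j hi hj
      rcases eq_or_ne i j with rfl | hne
      · simp
      have hvne : i.val ≠ j.val := fun e => hne (Fin.ext e)
      rcases lt_trichotomy i.val p with hip | hip | hip
      · rcases lt_trichotomy j.val p with hjp | hjp | hjp
        · have hp0 : p ≠ 0 := by omega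
          exact IH (p - 1) (by omega) i j (by omega) (by omega)
        · -- j.val = p, i < j
          have hij : i < j := by rw [Fin.lt_def]; omega
          have hh := half i j hjp hij
          have hσne : (σ i).val ≠ (σ j).val := by
            intro e; exact hne (σ.injective (Fin.ext e))
          have hτne : (τ i).val ≠ (τ j).val := by
            intro e; exact hne (τ.injective (Fin.ext e))
          simp only [Fin.lt_def] at hh ⊢
          omega
        · omega
      · -- i.val = p, so j.val < p, j < i
        have hjp : j.val < p := by omega
        have hji : j < i := by rw [Fin.lt_def]; omega
        exact half j i hip hji
      · omega
  have key' : ∀ i j : Fin n, σ i < σ j ↔ τ i < τ j := fun i j =>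
    key n i j (le_of_lt i.isLt) (le_of_lt j.isLt)
  have hu : StrictMono (fun a => τ (σ.symm a)) := by
    intro a b hab
    have := (key' (σ.symm a) (σ.symm b)).1
    simp only [Equiv.apply_symm_apply] at this ⊢
    exact this (by simpa using hab)
  have hrange : Set.range (fun a => τ (σ.symm a)) = Set.range (id : Fin n → Fin n) := by
    rw [Set.range_id]
    exact Set.range_eq_univ.2 (τ.surjective.comp σ.symm.surjective)
  have huid : (fun a => τ (σ.symm a)) = id := (hu.range_inj strictMono_id).1 hrange
  apply Equiv.ext
  intro x
  have := congrFun huid (σ x)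
  simp only [Equiv.symm_apply_apply, id_eq] at this
  exact this.symm


lemma cCount_surjective : ∀ (n : ℕ) (b : Fin n → ℕ), (∀ p, b p ≤ p.val) →
    ∃ σ : Equiv.Perm (Fin n), ∀ p, cCount σ p = b p := by
  intro n
  induction n with
  | zero => intro b _; exact ⟨1, fun p => p.elim0⟩
  | succ n IH =>
    intro b hb
    obtain ⟨σ', hσ'⟩ := IH (fun p => b p.castSucc)
      (fun p => by simpa using hb p.castSucc)
    have hbl : b (Fin.last n) ≤ n := hb (Fin.last n)
    set v : Fin (n + 1) := ⟨n - b (Fin.last n), by omega⟩ with hv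
    set σ : Equiv.Perm (Fin (n + 1)) :=
      (finSuccEquivLast.trans (Equiv.optionCongr σ')).trans (finSuccEquiv' v).symm with hσdef
    have hcast : ∀ p : Fin n, σ p.castSucc = v.succAbove (σ' p) := by
      intro p
      simp [hσdef, finSuccEquivLast_castSucc, finSuccEquiv'_symm_some]
    have hlast : σ (Fin.last n) = v := by
      simp [hσdef, finSuccEquivLast_last, finSuccEquiv'_symm_none]
    refine ⟨σ, ?_⟩
    intro p
    rcases Fin.eq_castSucc_or_eq_last p with ⟨q, rfl⟩ | rfl
    · rw [show b q.castSucc = cCount σ' q from (hσ' q).symm]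
      unfold cCount
      rw [show (Finset.univ.filter (fun k : Fin (n+1) => k < q.castSucc ∧ σ q.castSucc < σ k))
          = (Finset.univ.filter (fun k : Fin n => k < q ∧ σ' q < σ' k)).map
              (Fin.castSuccEmb) from ?_]
      · exact Finset.card_map _
      ext x
      simp only [Finset.mem_filter, Finset.mem_univ, true_and, Finset.mem_map]
      constructor
      · rintro ⟨hxq, hσx⟩
        have hxl : x ≠ Fin.last n := by
          intro e
          rw [e] at hxq
          exact absurd hxq (not_lt.2 (le_of_lt (Fin.castSucc_lt_last q)))
        obtain ⟨y, rfl⟩ := Fin.exists_castSucc_eq.2 hxl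
        refine ⟨y, ⟨?_, ?_⟩, rfl⟩
        · exact Fin.castSucc_lt_castSucc_iff.1 hxq
        · rw [hcast, hcast] at hσx
          exact Fin.succAbove_lt_succAbove_iff.1 hσx
      · rintro ⟨y, ⟨hyq, hσy⟩, rfl⟩
        show y.castSucc < q.castSucc ∧ σ q.castSucc < σ y.castSucc
        refine ⟨Fin.castSucc_lt_castSucc_iff.2 hyq, ?_⟩
        rw [hcast, hcast]
        exact Fin.succAbove_lt_succAbove_iff.2 hσy
    · unfold cCount
      have hfilt : (Finset.univ.filter
            (fun k : Fin (n+1) => k < Fin.last n ∧ σ (Fin.last n) < σ k))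
          = (Finset.univ.filter (fun w : Fin n => v ≤ w.castSucc)).map
              ⟨fun w => (σ'.symm w).castSucc, fun a c hac => by
                simpa using σ'.symm.injective (Fin.castSucc_injective n hac)⟩ := by
        ext x
        simp only [Finset.mem_filter, Finset.mem_univ, true_and, Finset.mem_map,
          Function.Embedding.coeFn_mk]
        constructor
        · rintro ⟨hxl, hσx⟩
          have hxl2 : x ≠ Fin.last n := ne_of_lt hxl
          obtain ⟨y, rfl⟩ := Fin.exists_castSucc_eq.2 hxl2
          rw [hlast, hcast] at hσx
          refine ⟨σ' y, (Fin.lt_succAbove_iff_le_castSucc v (σ' y)).1 hσx, by show (σ'.symm (σ' y)).castSucc = _; simp⟩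
        · rintro ⟨w, hw, rfl⟩
          refine ⟨Fin.castSucc_lt_last _, ?_⟩
          show σ (Fin.last n) < σ ((σ'.symm w).castSucc)
          rw [hlast, hcast, σ'.apply_symm_apply]
          exact (Fin.lt_succAbove_iff_le_castSucc v w).2 hw
      rw [hfilt, Finset.card_map]
      by_cases hb0 : b (Fin.last n) = 0
      · rw [hb0]
        rw [Finset.card_eq_zero]
        ext w
        simp only [Finset.mem_filter, Finset.mem_univ, true_and, Finset.notMem_empty,
          iff_false, Fin.le_def, Fin.coe_castSucc, hv, hb0]
        omega
      · have hvn : v.val < n := by simp only [hv]; omega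
        have : (Finset.univ.filter (fun w : Fin n => v ≤ w.castSucc))
            = Finset.Ici (⟨v.val, hvn⟩ : Fin n) := by
          ext w
          simp only [Finset.mem_filter, Finset.mem_univ, true_and, Finset.mem_Ici,
            Fin.le_def, Fin.coe_castSucc]
        rw [this, Fin.card_Ici]
        simp only [hv]
        omega


def catF {n : ℕ} (σ : Equiv.Perm (Fin n)) (i : Fin n) : Fin (n + 1) :=
  ⟨n - cCount σ ⟨n - 1 - i.val, by have := i.isLt; omega⟩, by omega⟩

lemma catF_lb {n : ℕ} (σ : Equiv.Perm (Fin n)) (i : Fin n) :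
    i.val + 1 ≤ (catF σ i).val := by
  have h1 := cCount_le σ ⟨n - 1 - i.val, by have := i.isLt; omega⟩
  have h2 := i.isLt
  simp only [catF] at *
  omega

lemma catF_mono {n : ℕ} {σ : Equiv.Perm (Fin n)}
    (h : ¬ ∃ i j k : Fin n, i < j ∧ j < k ∧ σ j < σ i ∧ σ i < σ k)
    (i j : Fin n) (hij : i ≤ j) : (catF σ i).val ≤ (catF σ j).val := by
  have h2 := i.isLt
  have h3 := j.isLt
  have hle : (⟨n - 1 - j.val, by omega⟩ : Fin n) ≤ ⟨n - 1 - i.val, by omega⟩ := by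
    simp only [Fin.mk_le_mk]
    have := Fin.le_def.1 hij
    omega
  have := cCount_mono h hle
  simp only [catF]
  omega

set_option maxHeartbeats 1000000 in
/-- The induced subposet, on 213-avoiding permutations, of the componentwise order on
zero-count vectors is isomorphic to the Catalan distributive lattice of weakly increasing
sequences `(x_1,...,x_n)` with `i ≤ x_i ≤ n`, ordered by reverse componentwise
comparison. -/
theorem stmt12 (n : ℕ) :
    ∃ e : {σ : Equiv.Perm (Fin n) //
            ¬ ∃ i j k : Fin n, i < j ∧ j < k ∧ σ j < σ i ∧ σ i < σ k} ≃
          {x : Fin n → Fin (n + 1) //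
            (∀ i : Fin n, i.val + 1 ≤ (x i).val) ∧
            (∀ i j : Fin n, i ≤ j → (x i).val ≤ (x j).val)},
      ∀ σ τ, (∀ p : Fin n, cCount σ.1 p ≤ cCount τ.1 p) ↔
        (∀ i : Fin n, (e τ).1 i ≤ (e σ).1 i) := by
  classical
  set A := {σ : Equiv.Perm (Fin n) //
      ¬ ∃ i j k : Fin n, i < j ∧ j < k ∧ σ j < σ i ∧ σ i < σ k} with hA
  set B := {x : Fin n → Fin (n + 1) //
      (∀ i : Fin n, i.val + 1 ≤ (x i).val) ∧
      (∀ i j : Fin n, i ≤ j → (x i).val ≤ (x j).val)} with hB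
  let F : A → B := fun σ => ⟨catF σ.1, fun i => catF_lb σ.1 i, fun i j hij => catF_mono σ.2 i j hij⟩
  have hFval : ∀ (σ : A) (i : Fin n), ((F σ).1 i).val
      = n - cCount σ.1 ⟨n - 1 - i.val, by have := i.isLt; omega⟩ := fun σ i => rfl
  have hFinj : Function.Injective F := by
    intro σ τ hst
    have hx : ∀ i : Fin n, catF σ.1 i = catF τ.1 i := by
      intro i
      have := congrArg Subtype.val hst
      exact congrFun this i
    have hcc : ∀ p : Fin n, cCount σ.1 p = cCount τ.1 p := by
      intro p
      have hpn := p.isLt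
      have h1 := hx ⟨n - 1 - p.val, by omega⟩
      have h2 : (⟨n - 1 - (n - 1 - p.val), by omega⟩ : Fin n) = p := Fin.ext (by simp only [Fin.val_mk]; omega)
      simp only [catF, Fin.mk.injEq] at h1
      rw [h2] at h1
      have h3 := cCount_le σ.1 p
      have h4 := cCount_le τ.1 p
      omega
    exact Subtype.ext (cCount_injective hcc)
  have hFsurj : Function.Surjective F := by
    rintro ⟨x, hx1, hx2⟩
    set b : Fin n → ℕ := fun p => n - (x ⟨n - 1 - p.val, by have := p.isLt; omega⟩).val with hb
    have hble : ∀ p : Fin n, b p ≤ p.val := by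
      intro p
      have hpn := p.isLt
      have := hx1 ⟨n - 1 - p.val, by omega⟩
      simp only [Fin.val_mk] at this
      simp only [hb]
      omega
    obtain ⟨σ0, hσ0⟩ := cCount_surjective n b hble
    have hmono : ∀ p q : Fin n, p ≤ q → cCount σ0 p ≤ cCount σ0 q := by
      intro p q hpq
      rw [hσ0, hσ0]
      have hpn := p.isLt
      have hqn := q.isLt
      have hpq' := Fin.le_def.1 hpq
      have hle : (⟨n - 1 - q.val, by omega⟩ : Fin n) ≤ ⟨n - 1 - p.val, by omega⟩ := by
        simp only [Fin.le_def]
        omega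
      have := hx2 _ _ hle
      simp only [hb]
      omega
    refine ⟨⟨σ0, avoid_of_mono hmono⟩, ?_⟩
    apply Subtype.ext
    funext i
    apply Fin.ext
    have hin := i.isLt
    have h2 : (⟨n - 1 - (n - 1 - i.val), by omega⟩ : Fin n) = i := Fin.ext (by simp only [Fin.val_mk]; omega)
    have hxle := (x i).isLt
    have hxge := hx1 i
    show (catF σ0 i).val = (x i).val
    simp only [catF, hσ0, hb]
    rw [show (x ⟨n - 1 - (n - 1 - i.val), by omega⟩) = x i from by rw [h2]]
    omega
  refine ⟨Equiv.ofBijective F ⟨hFinj, hFsurj⟩, ?_⟩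
  intro σ τ
  constructor
  · intro h i
    rw [Fin.le_def]
    show (catF τ.1 i).val ≤ (catF σ.1 i).val
    have := h ⟨n - 1 - i.val, by have := i.isLt; omega⟩
    simp only [catF]
    omega
  · intro h p
    have hpn := p.isLt
    have h3 := cCount_le σ.1 p
    have h4 := cCount_le τ.1 p
    have h5 : (catF τ.1 ⟨n - 1 - p.val, by omega⟩).val
        ≤ (catF σ.1 ⟨n - 1 - p.val, by omega⟩).val :=
      Fin.le_def.1 (h ⟨n - 1 - p.val, by omega⟩)
    simp only [catF, Fin.val_mk] at h5
    have h6 : n - 1 - (n - 1 - p.val) = p.val := by omega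
    simp only [h6, Fin.eta] at h5
    omega
end

section
/- Monotone triangles of order n (triangular arrays a_{i,j}, 1 ≤ i ≤ n, n-i ≤ j ≤ n-1, with a_{n,j} = j+1, strictly increasing along rows, and satisfying a_{i+1,j-1} ≤ a_{i,j} ≤ a_{i+1,j}) are in bijection with n×n alternating sign matrices, where row i of the monotone triangle lists the columns whose partial column sums (from the top) through row i equal 1. -/
/-- An `n × n` alternating sign matrix, with rows and columns indexed `1,...,n` (entries
outside this range are `0`): all partial row and column sums are `0` or `1`, and every
full row and column sums to `1` (this is the standard characterization of `{0,1,-1}`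
matrices whose rows and columns sum to one with nonzero entries alternating in sign). -/
def IsASM (n : ℕ) (A : ℕ → ℕ → ℤ) : Prop :=
  (∀ i j, ¬(1 ≤ i ∧ i ≤ n ∧ 1 ≤ j ∧ j ≤ n) → A i j = 0) ∧
  (∀ i j, 1 ≤ i → i ≤ n → 1 ≤ j → j ≤ n →
    ((∑ j' ∈ Finset.Icc 1 j, A i j' = 0 ∨ ∑ j' ∈ Finset.Icc 1 j, A i j' = 1) ∧
     (∑ i' ∈ Finset.Icc 1 i, A i' j = 0 ∨ ∑ i' ∈ Finset.Icc 1 i, A i' j = 1))) ∧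
  (∀ i, 1 ≤ i → i ≤ n → ∑ j ∈ Finset.Icc 1 n, A i j = 1) ∧
  (∀ j, 1 ≤ j → j ≤ n → ∑ i ∈ Finset.Icc 1 n, A i j = 1)

/-- A monotone triangle of order `n`: rows `1 ≤ i ≤ n`, columns `n - i ≤ j ≤ n - 1`
(entries outside are `0`), bottom row `a n j = j + 1`, rows strictly increasing, and
`a (i+1) (j-1) ≤ a i j ≤ a (i+1) j`. -/
def IsMonotoneTriangle (n : ℕ) (a : ℕ → ℕ → ℕ) : Prop :=
  (∀ i j, ¬(1 ≤ i ∧ i ≤ n ∧ n - i ≤ j ∧ j ≤ n - 1) → a i j = 0) ∧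
  (∀ j, j ≤ n - 1 → a n j = j + 1) ∧
  (∀ i j, 1 ≤ i → i ≤ n → n - i ≤ j → j + 1 ≤ n - 1 → a i j < a i (j + 1)) ∧
  (∀ i j, 1 ≤ i → i + 1 ≤ n → n - i ≤ j → j ≤ n - 1 →
    a (i + 1) (j - 1) ≤ a i j ∧ a i j ≤ a (i + 1) j)


open Finset

section Helpers

lemma sum_indicator_card (s : Finset ℕ) (f : ℕ → ℤ) (h : ∀ c ∈ s, f c = 0 ∨ f c = 1) :
    ∑ c ∈ s, f c = (((s.filter (fun c => f c = 1)).card : ℤ)) := by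
  classical
  rw [Finset.card_filter]
  push_cast
  apply Finset.sum_congr rfl
  intro c hc
  rcases h c hc with h0 | h1
  · rw [h0]; simp [h0]
  · rw [h1]; simp [h1]

end Helpers

section Triangle

variable {n : ℕ} {a : ℕ → ℕ → ℕ}

lemma mt_bdd (ht : IsMonotoneTriangle n a) :
    ∀ d j, d < n → d ≤ j → j ≤ n - 1 →
      j - d + 1 ≤ a (n - d) j ∧ a (n - d) j ≤ j + 1 := by
  intro d
  induction d with
  | zero =>
    intro j hd _ hj
    rw [show n - 0 = n from rfl, ht.2.1 j hj]
    omega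
  | succ d ih =>
    intro j hd hdj hj
    obtain ⟨hL, hU⟩ := ht.2.2.2 (n - (d+1)) j (by omega) (by omega) (by omega) hj
    have e : n - (d+1) + 1 = n - d := by omega
    rw [e] at hL hU
    have hu := ih j (by omega) (by omega) hj
    have hl := ih (j-1) (by omega) (by omega) (by omega)
    omega

lemma mt_bounds (ht : IsMonotoneTriangle n a) {i j : ℕ} (h1 : 1 ≤ i) (h2 : i ≤ n)
    (h3 : n - i ≤ j) (h4 : j ≤ n - 1) :
    j - (n - i) + 1 ≤ a i j ∧ a i j ≤ j + 1 := by
  have := mt_bdd ht (n - i) j (by omega) h3 h4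
  rwa [show n - (n - i) = i by omega] at this

lemma mt_pos_le (ht : IsMonotoneTriangle n a) {i j : ℕ} (h1 : 1 ≤ i) (h2 : i ≤ n)
    (h3 : n - i ≤ j) (h4 : j ≤ n - 1) : 1 ≤ a i j ∧ a i j ≤ n := by
  have := mt_bounds ht h1 h2 h3 h4
  omega

lemma mt_row_mono (ht : IsMonotoneTriangle n a) {i j j' : ℕ} (h1 : 1 ≤ i) (h2 : i ≤ n)
    (h3 : n - i ≤ j) (h4 : j ≤ j') (h5 : j' ≤ n - 1) : a i j ≤ a i j' := by
  induction j' , h4 using Nat.le_induction with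
  | base => exact le_rfl
  | succ j' hj ih =>
    exact le_trans (ih (by omega)) (le_of_lt (ht.2.2.1 i j' h1 h2 (by omega) (by omega)))

lemma mt_row_strict (ht : IsMonotoneTriangle n a) {i j j' : ℕ} (h1 : 1 ≤ i) (h2 : i ≤ n)
    (h3 : n - i ≤ j) (h4 : j < j') (h5 : j' ≤ n - 1) : a i j < a i j' :=
  lt_of_lt_of_le (ht.2.2.1 i j h1 h2 h3 (by omega))
    (mt_row_mono ht h1 h2 (by omega) h4 h5)

lemma mt_injOn (ht : IsMonotoneTriangle n a) {i : ℕ} (h1 : 1 ≤ i) (h2 : i ≤ n) :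
    Set.InjOn (a i) (Finset.Icc (n - i) (n - 1)) := by
  intro x hx y hy hxy
  simp only [Finset.coe_Icc, Set.mem_Icc] at hx hy
  by_contra hne
  rcases Nat.lt_or_ge x y with h | h
  · exact absurd hxy (ne_of_lt (mt_row_strict ht h1 h2 hx.1 h hy.2))
  · have h' : y < x := by omega
    exact absurd hxy.symm (ne_of_lt (mt_row_strict ht h1 h2 hy.1 h' hx.2))

end Triangle

section Forward

open Classical in
/-- Indicator that column `c` appears in row `i` of the triangle. -/
noncomputable def rowInd (n : ℕ) (a : ℕ → ℕ → ℕ) (i c : ℕ) : ℤ :=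
  if ∃ j, n - i ≤ j ∧ j ≤ n - 1 ∧ a i j = c then 1 else 0

noncomputable def toASM (n : ℕ) (a : ℕ → ℕ → ℕ) (i c : ℕ) : ℤ :=
  if 1 ≤ i ∧ i ≤ n ∧ 1 ≤ c ∧ c ≤ n then rowInd n a i c - rowInd n a (i-1) c else 0

variable {n : ℕ} {a : ℕ → ℕ → ℕ}

lemma rowInd_zero (hn : 1 ≤ n) (c : ℕ) : rowInd n a 0 c = 0 := by
  rw [rowInd, if_neg]
  rintro ⟨j, hj1, hj2, -⟩
  omega

lemma rowInd_mem (hn : 1 ≤ n) {i c : ℕ} :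
    rowInd n a i c = 1 ↔ ∃ j, n - i ≤ j ∧ j ≤ n - 1 ∧ a i j = c := by
  rw [rowInd]
  split
  · exact iff_of_true rfl ‹_›
  · exact iff_of_false (by norm_num) ‹_›

lemma rowInd_cases (i c : ℕ) : rowInd n a i c = 0 ∨ rowInd n a i c = 1 := by
  rw [rowInd]; split <;> simp

/-- Telescoping of partial column sums. -/
lemma sum_toASM_col (hn : 1 ≤ n) {i c : ℕ} (h1 : 1 ≤ i) (h2 : i ≤ n) (h3 : 1 ≤ c) (h4 : c ≤ n) :
    ∑ i' ∈ Finset.Icc 1 i, toASM n a i' c = rowInd n a i c := by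
  induction i, h1 using Nat.le_induction with
  | base =>
    simp only [Finset.Icc_self, Finset.sum_singleton, toASM,
      if_pos (⟨le_rfl, h2, h3, h4⟩ : 1 ≤ 1 ∧ 1 ≤ n ∧ 1 ≤ c ∧ c ≤ n)]
    rw [show (1:ℕ) - 1 = 0 from rfl, rowInd_zero hn, sub_zero]
  | succ i hi ih =>
    rw [Finset.sum_Icc_succ_top (by omega), ih (by omega)]
    rw [toASM, if_pos ⟨by omega, h2, h3, h4⟩]
    simp

end Forward

section Forward2

variable {n : ℕ} {a : ℕ → ℕ → ℕ}

/-- The set of columns appearing in row `i`, as an image. -/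
lemma rowInd_filter_eq (ht : IsMonotoneTriangle n a) {i : ℕ} (h1 : 1 ≤ i) (h2 : i ≤ n) :
    (Finset.Icc 1 n).filter (fun c => rowInd n a i c = 1)
      = (Finset.Icc (n - i) (n - 1)).image (a i) := by
  classical
  ext c
  simp only [Finset.mem_filter, Finset.mem_image, Finset.mem_Icc]
  rw [rowInd_mem (by omega)]
  constructor
  · rintro ⟨-, j, hj1, hj2, rfl⟩
    exact ⟨j, ⟨hj1, hj2⟩, rfl⟩
  · rintro ⟨j, ⟨hj1, hj2⟩, rfl⟩
    have := mt_pos_le ht h1 h2 hj1 hj2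
    exact ⟨⟨this.1, this.2⟩, j, hj1, hj2, rfl⟩

lemma rowInd_sum (ht : IsMonotoneTriangle n a) {i : ℕ} (h1 : 1 ≤ i) (h2 : i ≤ n) :
    ∑ c ∈ Finset.Icc 1 n, rowInd n a i c = (i : ℤ) := by
  classical
  rw [sum_indicator_card _ _ (fun c _ => rowInd_cases i c), rowInd_filter_eq ht h1 h2,
    Finset.card_image_of_injOn (mt_injOn ht h1 h2), Nat.card_Icc]
  congr 1
  omega

/-- number of entries in row `i` that are `≤ c`. -/
noncomputable def cnt (n : ℕ) (a : ℕ → ℕ → ℕ) (i c : ℕ) : ℕ :=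
  ((Finset.Icc (n - i) (n - 1)).filter (fun j => a i j ≤ c)).card

lemma cnt_zero (hn : 1 ≤ n) (c : ℕ) : cnt n a 0 c = 0 := by
  rw [cnt, Finset.card_eq_zero, Finset.filter_eq_empty_iff]
  intro j hj
  simp only [Finset.mem_Icc] at hj
  omega

/-- partial row sums of indicators equal counts. -/
lemma rowInd_partial_sum (ht : IsMonotoneTriangle n a) {i c : ℕ} (h1 : 1 ≤ i) (h2 : i ≤ n)
    (h4 : c ≤ n) :
    ∑ c' ∈ Finset.Icc 1 c, rowInd n a i c' = (cnt n a i c : ℤ) := by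
  classical
  rw [sum_indicator_card _ _ (fun c' _ => rowInd_cases i c')]
  have hset : (Finset.Icc 1 c).filter (fun c' => rowInd n a i c' = 1)
      = ((Finset.Icc (n - i) (n - 1)).filter (fun j => a i j ≤ c)).image (a i) := by
    ext c'
    constructor
    · intro hc'
      rw [Finset.mem_filter, Finset.mem_Icc, rowInd_mem (by omega : 1 ≤ n)] at hc'
      obtain ⟨⟨hc1', hc2'⟩, j, hj1, hj2, rfl⟩ := hc'
      rw [Finset.mem_image]
      exact ⟨j, Finset.mem_filter.2 ⟨Finset.mem_Icc.2 ⟨hj1, hj2⟩, hc2'⟩, rfl⟩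
    · intro hc'
      rw [Finset.mem_image] at hc'
      obtain ⟨j, hj, rfl⟩ := hc'
      rw [Finset.mem_filter, Finset.mem_Icc] at hj
      obtain ⟨⟨hj1, hj2⟩, hle⟩ := hj
      rw [Finset.mem_filter, Finset.mem_Icc, rowInd_mem (by omega : 1 ≤ n)]
      exact ⟨⟨(mt_pos_le ht h1 h2 hj1 hj2).1, hle⟩, j, hj1, hj2, rfl⟩
  rw [hset, Finset.card_image_of_injOn ((mt_injOn ht h1 h2).mono (fun x hx => by
    rw [Finset.mem_coe, Finset.mem_filter] at hx
    exact Finset.mem_coe.2 hx.1)), cnt]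

lemma cnt_mono (ht : IsMonotoneTriangle n a) {i c : ℕ} (h1 : 1 ≤ i) (h2 : i ≤ n) :
    cnt n a (i-1) c ≤ cnt n a i c := by
  rcases Nat.eq_or_lt_of_le h1 with h | h
  · rw [← h]; rw [cnt_zero (by omega)]; exact Nat.zero_le _
  · -- i ≥ 2 : inject j ↦ j - 1
    apply Finset.card_le_card_of_injOn (fun j => j - 1)
    · intro j hj
      simp only [Finset.mem_coe, Finset.mem_filter, Finset.mem_Icc] at hj ⊢
      obtain ⟨⟨hj1, hj2⟩, hject⟩ := hj
      have hcond := ht.2.2.2 (i-1) j (by omega) (by omega) (by omega) hj2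
      rw [show i - 1 + 1 = i by omega] at hcond
      exact ⟨⟨by omega, by omega⟩, le_trans hcond.1 hject⟩
    · intro x hx y hy hxy
      simp only [Finset.mem_coe, Finset.mem_filter, Finset.mem_Icc] at hx hy
      dsimp only at hxy
      omega

lemma cnt_le_succ (ht : IsMonotoneTriangle n a) {i c : ℕ} (h1 : 1 ≤ i) (h2 : i ≤ n) :
    cnt n a i c ≤ cnt n a (i-1) c + 1 := by
  rcases Nat.eq_or_lt_of_le h1 with h | h
  · rw [← h]
    have : cnt n a 1 c ≤ (Finset.Icc (n-1) (n-1)).card :=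
      Finset.card_le_card (Finset.filter_subset _ _)
    simp only [Nat.card_Icc] at this
    omega
  · -- i ≥ 2 : erase n - i then inject by identity
    have key : (((Finset.Icc (n - i) (n - 1)).filter (fun j => a i j ≤ c)).erase (n-i)).card
        ≤ cnt n a (i-1) c := by
      apply Finset.card_le_card_of_injOn id
      · intro j hj
        rw [Finset.mem_coe, Finset.mem_erase] at hj
        obtain ⟨hne, hj⟩ := hj
        simp only [Finset.mem_coe, Finset.mem_filter, Finset.mem_Icc, id_eq] at hj ⊢
        obtain ⟨⟨hj1, hj2⟩, hject⟩ := hj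
        have hcond := ht.2.2.2 (i-1) j (by omega) (by omega) (by omega) hj2
        rw [show i - 1 + 1 = i by omega] at hcond
        exact ⟨⟨by omega, hj2⟩, le_trans hcond.2 hject⟩
      · exact Function.Injective.injOn (fun x y h => h)
    have h2' := Finset.pred_card_le_card_erase
      (s := (Finset.Icc (n - i) (n - 1)).filter (fun j => a i j ≤ c)) (a := n - i)
    rw [cnt, cnt] at *
    omega

theorem isASM_toASM (hn : 1 ≤ n) (ht : IsMonotoneTriangle n a) : IsASM n (toASM n a) := by
  refine ⟨?_, ?_, ?_, ?_⟩
  · intro i j h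
    rw [toASM, if_neg h]
  · intro i c hi1 hi2 hc1 hc2
    constructor
    · -- partial row sums
      have hsum : ∑ c' ∈ Finset.Icc 1 c, toASM n a i c'
          = (cnt n a i c : ℤ) - (cnt n a (i-1) c : ℤ) := by
        have : ∀ c' ∈ Finset.Icc 1 c, toASM n a i c' = rowInd n a i c' - rowInd n a (i-1) c' := by
          intro c' hc'
          simp only [Finset.mem_Icc] at hc'
          rw [toASM, if_pos ⟨hi1, hi2, hc'.1, by omega⟩]
        rw [Finset.sum_congr rfl this, Finset.sum_sub_distrib,
          rowInd_partial_sum ht hi1 hi2 hc2]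
        rcases Nat.eq_or_lt_of_le hi1 with h | h
        · rw [← h]
          simp only [show (1:ℕ) - 1 = 0 from rfl, cnt_zero hn]
          rw [Finset.sum_congr rfl (fun c' _ => rowInd_zero hn c')]
          simp
        · rw [rowInd_partial_sum ht (by omega) (by omega) hc2]
      rw [hsum]
      have := cnt_mono ht hi1 hi2 (c := c)
      have := cnt_le_succ ht hi1 hi2 (c := c)
      omega
    · -- partial column sums
      rw [sum_toASM_col hn hi1 hi2 hc1 hc2]
      exact rowInd_cases i c
  · -- full row sums
    intro i hi1 hi2
    have : ∀ c' ∈ Finset.Icc 1 n, toASM n a i c' = rowInd n a i c' - rowInd n a (i-1) c' := by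
      intro c' hc'
      simp only [Finset.mem_Icc] at hc'
      rw [toASM, if_pos ⟨hi1, hi2, hc'.1, hc'.2⟩]
    rw [Finset.sum_congr rfl this, Finset.sum_sub_distrib, rowInd_sum ht hi1 hi2]
    rcases Nat.eq_or_lt_of_le hi1 with h | h
    · rw [← h]
      simp only [show (1:ℕ) - 1 = 0 from rfl]
      rw [Finset.sum_congr rfl (fun c' _ => rowInd_zero hn c')]
      simp
    · rw [rowInd_sum ht (by omega) (by omega)]
      push_cast
      omega
  · -- full column sums
    intro c hc1 hc2
    rw [sum_toASM_col hn hn (le_refl n) hc1 hc2, rowInd_mem hn]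
    exact ⟨c - 1, by omega, by omega, by rw [ht.2.1 (c-1) (by omega)]; omega⟩

end Forward2

section Kth


def kth (s : Finset ℕ) (k : ℕ) : ℕ := (s.sort (· ≤ ·)).getD k 0

lemma kth_mem {s : Finset ℕ} {k : ℕ} (hk : k < s.card) : kth s k ∈ s := by
  have h : k < (s.sort (· ≤ ·)).length := by rwa [Finset.length_sort]
  rw [kth, List.getD_eq_getElem _ _ h]
  exact (Finset.mem_sort _).1 (List.getElem_mem h)

lemma kth_lt_kth {s : Finset ℕ} {k : ℕ} (hk : k + 1 < s.card) :
    kth s k < kth s (k + 1) := by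
  have h : k + 1 < (s.sort (· ≤ ·)).length := by rwa [Finset.length_sort]
  have h' : k < (s.sort (· ≤ ·)).length := Nat.lt_of_succ_lt h
  rw [kth, kth, List.getD_eq_getElem _ _ h, List.getD_eq_getElem _ _ h']
  exact List.Pairwise.rel_get_of_lt (s.sortedLT_sort.pairwise) (by simp)

lemma kth_le_iff {s : Finset ℕ} {k : ℕ} (hk : k < s.card) (c : ℕ) :
    kth s k ≤ c ↔ k + 1 ≤ (s.filter (· ≤ c)).card := by
  classical
  set l := s.sort (· ≤ ·) with hl
  have hlen : l.length = s.card := Finset.length_sort _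
  have hkl : k < l.length := by rwa [hlen]
  have hcard : (s.filter (· ≤ c)).card = (l.filter (fun x => x ≤ c)).length := by
    have h2 : (↑l : Multiset ℕ) = s.1 := Finset.sort_eq _ _
    rw [Finset.card, Finset.filter_val, ← h2]
    simp
  rw [hcard, kth, List.getD_eq_getElem _ _ hkl]
  have hsorted := s.pairwise_sort (· ≤ ·)
  constructor
  · intro hle
    -- the first k+1 entries of l all satisfy (· ≤ c)
    have htake : (l.take (k+1)).filter (fun x => x ≤ c) = l.take (k+1) := by
      apply List.filter_eq_self.2
      intro x hx
      obtain ⟨i, hi, rfl⟩ := List.getElem_of_mem hx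
      have hi2 : i < k + 1 := lt_of_lt_of_le hi (by simp [List.length_take])
      have hi3 : i < l.length := lt_of_lt_of_le hi (by simp [List.length_take])
      rw [List.getElem_take]
      have : l[i] ≤ l[k] := by
        rcases eq_or_lt_of_le (Nat.lt_succ_iff.1 hi2) with h | h
        · subst h; exact le_rfl
        · exact le_of_lt (List.Pairwise.rel_get_of_lt s.sortedLT_sort.pairwise (by simpa))
      simpa using le_trans this hle
    have := congrArg List.length htake
    calc k + 1 = (l.take (k+1)).length := by simp [List.length_take]; omega
      _ = ((l.take (k+1)).filter (fun x => x ≤ c)).length := by rw [htake]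
      _ ≤ (l.filter (fun x => x ≤ c)).length :=
        List.Sublist.length_le (List.Sublist.filter _ (List.take_sublist _ _))
  · intro hge
    by_contra hgt
    push_neg at hgt
    -- entries of drop k all exceed c
    have hdrop : (l.drop k).filter (fun x => x ≤ c) = [] := by
      apply List.filter_eq_nil_iff.2
      intro x hx
      obtain ⟨i, hi, rfl⟩ := List.getElem_of_mem hx
      have hki : k + i < l.length := by simp [List.length_drop] at hi; omega
      simp only [List.getElem_drop]
      have : l[k] ≤ l[k + i]'hki := by
        rcases Nat.eq_or_lt_of_le (Nat.le_add_right k i) with h | h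
        · exact le_of_eq (by congr 1)
        · exact le_of_lt (List.Pairwise.rel_get_of_lt s.sortedLT_sort.pairwise (by simp; omega))
      simp only [decide_eq_true_eq]
      omega
    have : l.filter (fun x => x ≤ c) = (l.take k).filter (fun x => x ≤ c) := by
      conv_lhs => rw [← List.take_append_drop k l]
      rw [List.filter_append, hdrop, List.append_nil]
    rw [this] at hge
    have : ((l.take k).filter (fun x => x ≤ c)).length ≤ k :=
      le_trans (List.length_filter_le _ _) (by simp [List.length_take])
    omega

lemma mem_iff_kth {s : Finset ℕ} {c : ℕ} :
    c ∈ s ↔ ∃ k, k < s.card ∧ kth s k = c := by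
  constructor
  · intro hc
    have : c ∈ s.sort (· ≤ ·) := (Finset.mem_sort _).2 hc
    obtain ⟨i, hi, hgi⟩ := List.getElem_of_mem this
    exact ⟨i, by rwa [Finset.length_sort] at hi, by rw [kth, List.getD_eq_getElem _ _ hi, hgi]⟩
  · rintro ⟨k, hk, rfl⟩
    exact kth_mem hk

lemma filter_Icc_le (n c : ℕ) : (Finset.Icc 1 n).filter (· ≤ c) = Finset.Icc 1 (min c n) := by
  ext x; simp [Finset.mem_filter, Finset.mem_Icc]; omega

lemma kth_Icc {n j : ℕ} (hj : j < n) : kth (Finset.Icc 1 n) j = j + 1 := by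
  have hcard : (Finset.Icc 1 n).card = n := by simp
  have h1 := (kth_le_iff (by omega : j < (Finset.Icc 1 n).card) (j+1)).2
  have h2 := (kth_le_iff (by omega : j < (Finset.Icc 1 n).card) j).1
  rw [filter_Icc_le] at h1 h2
  simp only [Nat.card_Icc] at h1 h2
  have hle : kth (Finset.Icc 1 n) j ≤ j + 1 := h1 (by omega)
  by_contra h
  have := h2 (by omega)
  omega

end Kth

section Inverse

noncomputable def colS (A : ℕ → ℕ → ℤ) (i c : ℕ) : ℤ := ∑ i' ∈ Finset.Icc 1 i, A i' c

open Classical in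
noncomputable def rset (n : ℕ) (A : ℕ → ℕ → ℤ) (i : ℕ) : Finset ℕ :=
  (Finset.Icc 1 n).filter (fun c => colS A i c = 1)

noncomputable def toMT (n : ℕ) (A : ℕ → ℕ → ℤ) (i j : ℕ) : ℕ :=
  if 1 ≤ i ∧ i ≤ n ∧ n - i ≤ j ∧ j ≤ n - 1 then kth (rset n A i) (j - (n - i)) else 0

variable {n : ℕ} {A : ℕ → ℕ → ℤ}

lemma colS_succ (i c : ℕ) : colS A (i+1) c = colS A i c + A (i+1) c := by
  rw [colS, colS, Finset.sum_Icc_succ_top (by omega)]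

lemma colS_cases (hA : IsASM n A) {i c : ℕ} (h2 : i ≤ n) (h3 : 1 ≤ c) (h4 : c ≤ n) :
    colS A i c = 0 ∨ colS A i c = 1 := by
  rcases Nat.eq_zero_or_pos i with h | h
  · subst h; left; rw [colS]; simp
  · exact (hA.2.1 i c h h2 h3 h4).2

lemma rset_card (hA : IsASM n A) {i : ℕ} (h2 : i ≤ n) : (rset n A i).card = i := by
  classical
  have h1 : ((rset n A i).card : ℤ) = ∑ c ∈ Finset.Icc 1 n, colS A i c := by
    rw [rset]
    rw [sum_indicator_card _ _ (fun c hc => by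
      rw [Finset.mem_Icc] at hc
      exact colS_cases hA h2 hc.1 hc.2)]
  have h2' : ∑ c ∈ Finset.Icc 1 n, colS A i c = (i : ℤ) := by
    simp only [colS]
    rw [Finset.sum_comm]
    have hrow : ∀ i' ∈ Finset.Icc 1 i, ∑ c ∈ Finset.Icc 1 n, A i' c = 1 := by
      intro i' hi'
      rw [Finset.mem_Icc] at hi'
      exact hA.2.2.1 i' hi'.1 (le_trans hi'.2 h2)
    rw [Finset.sum_congr rfl hrow]
    simp
  have := h1.trans h2'
  exact_mod_cast this

end Inverse

section Inverse2

variable {n : ℕ} {A : ℕ → ℕ → ℤ}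

lemma rset_filter_sum (hA : IsASM n A) {i c : ℕ} (h2 : i ≤ n) (h4 : c ≤ n) :
    (((rset n A i).filter (· ≤ c)).card : ℤ) = ∑ c' ∈ Finset.Icc 1 c, colS A i c' := by
  classical
  have hset : (rset n A i).filter (· ≤ c) = (Finset.Icc 1 c).filter (fun c' => colS A i c' = 1) := by
    rw [rset]
    ext x
    simp only [Finset.mem_filter, Finset.mem_Icc]
    constructor
    · rintro ⟨⟨⟨hx1, hx2⟩, hx3⟩, hx4⟩
      exact ⟨⟨hx1, hx4⟩, hx3⟩
    · rintro ⟨⟨hx1, hx4⟩, hx3⟩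
      exact ⟨⟨⟨hx1, by omega⟩, hx3⟩, hx4⟩
  rw [hset, sum_indicator_card _ _ (fun c' hc' => by
    rw [Finset.mem_Icc] at hc'
    exact colS_cases hA h2 hc'.1 (by omega))]

/-- counts of elements `≤ c` in consecutive row sets differ by `0` or `1`. -/
lemma rset_cnt_step (hA : IsASM n A) {i c : ℕ} (h2 : i + 1 ≤ n) (h4 : c ≤ n) :
    (((rset n A i).filter (· ≤ c)).card ≤ ((rset n A (i+1)).filter (· ≤ c)).card) ∧
    (((rset n A (i+1)).filter (· ≤ c)).card ≤ ((rset n A i).filter (· ≤ c)).card + 1) := by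
  classical
  have hdiff : (((rset n A (i+1)).filter (· ≤ c)).card : ℤ)
      - (((rset n A i).filter (· ≤ c)).card : ℤ) = ∑ c' ∈ Finset.Icc 1 c, A (i+1) c' := by
    rw [rset_filter_sum hA (by omega) h4, rset_filter_sum hA (by omega) h4,
      ← Finset.sum_sub_distrib]
    apply Finset.sum_congr rfl
    intro c' _
    rw [colS_succ]; ring
  have hrange : ∑ c' ∈ Finset.Icc 1 c, A (i+1) c' = 0 ∨ ∑ c' ∈ Finset.Icc 1 c, A (i+1) c' = 1 := by
    rcases Nat.eq_zero_or_pos c with h | h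
    · subst h; left; simp
    · exact (hA.2.1 (i+1) c (by omega) h2 h h4).1
  constructor
  · rcases hrange with h | h <;> omega
  · rcases hrange with h | h <;> omega

end Inverse2

section Inverse3

variable {n : ℕ} {A : ℕ → ℕ → ℤ}

lemma rset_top (hn : 1 ≤ n) (hA : IsASM n A) : rset n A n = Finset.Icc 1 n := by
  classical
  rw [rset]
  apply Finset.filter_true_of_mem
  intro c hc
  rw [Finset.mem_Icc] at hc
  exact hA.2.2.2 c hc.1 hc.2

lemma toMT_mem (hA : IsASM n A) {i j : ℕ} (h : 1 ≤ i ∧ i ≤ n ∧ n - i ≤ j ∧ j ≤ n - 1) :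
    toMT n A i j ∈ rset n A i := by
  rw [toMT, if_pos h]
  exact kth_mem (by rw [rset_card hA h.2.1]; omega)

lemma toMT_le_n (hA : IsASM n A) {i j : ℕ} (h : 1 ≤ i ∧ i ≤ n ∧ n - i ≤ j ∧ j ≤ n - 1) :
    1 ≤ toMT n A i j ∧ toMT n A i j ≤ n := by
  have := toMT_mem hA h
  rw [rset, Finset.mem_filter, Finset.mem_Icc] at this
  exact this.1

theorem isMT_toMT (hn : 1 ≤ n) (hA : IsASM n A) : IsMonotoneTriangle n (toMT n A) := by
  refine ⟨?_, ?_, ?_, ?_⟩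
  · intro i j h
    rw [toMT, if_neg h]
  · -- bottom row
    intro j hj
    rw [toMT, if_pos ⟨hn, le_rfl, by omega, hj⟩, rset_top hn hA,
      Nat.sub_self n, Nat.sub_zero]
    exact kth_Icc (by omega)
  · -- strict rows
    intro i j h1 h2 h3 h4
    rw [toMT, if_pos ⟨h1, h2, h3, by omega⟩, toMT, if_pos ⟨h1, h2, by omega, h4⟩]
    rw [show j + 1 - (n - i) = (j - (n - i)) + 1 by omega]
    exact kth_lt_kth (by rw [rset_card hA h2]; omega)
  · -- interleaving
    intro i j h1 h2 h3 h4
    set k := j - (n - i) with hk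
    have hkn : k < i := by omega
    have hci : (rset n A i).card = i := rset_card hA (by omega)
    have hci1 : (rset n A (i+1)).card = i + 1 := rset_card hA h2
    constructor
    · -- toMT (i+1) (j-1) ≤ toMT i j
      rw [toMT, if_pos ⟨by omega, h2, by omega, by omega⟩,
        toMT, if_pos ⟨h1, by omega, h3, h4⟩]
      rw [show j - 1 - (n - (i+1)) = k by omega]
      set c := kth (rset n A i) k with hc
      have hcmem : c ∈ rset n A i := kth_mem (by omega)
      have hcn : c ≤ n := by
        rw [rset, Finset.mem_filter, Finset.mem_Icc] at hcmem; omega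
      rw [kth_le_iff (by omega) c]
      have hstep := (rset_cnt_step hA h2 hcn).1
      have := (kth_le_iff (s := rset n A i) (k := k) (by omega) c).1 le_rfl
      omega
    · -- toMT i j ≤ toMT (i+1) j
      rw [toMT, if_pos ⟨h1, by omega, h3, h4⟩,
        toMT, if_pos ⟨by omega, h2, by omega, h4⟩]
      rw [show j - (n - (i+1)) = k + 1 by omega]
      set c := kth (rset n A (i+1)) (k+1) with hc
      have hcmem : c ∈ rset n A (i+1) := kth_mem (by omega)
      have hcn : c ≤ n := by
        rw [rset, Finset.mem_filter, Finset.mem_Icc] at hcmem; omega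
      rw [kth_le_iff (by omega) c]
      have hstep := (rset_cnt_step hA h2 hcn).2
      have := (kth_le_iff (s := rset n A (i+1)) (k := k+1) (by omega) c).1 le_rfl
      omega

end Inverse3

section Round1

variable {n : ℕ} {a : ℕ → ℕ → ℕ}

lemma kth_image (ht : IsMonotoneTriangle n a) {i k : ℕ} (h1 : 1 ≤ i) (h2 : i ≤ n)
    (hk : k < i) :
    kth ((Finset.Icc (n-i) (n-1)).image (a i)) k = a i (n - i + k) := by
  classical
  set s := (Finset.Icc (n-i) (n-1)).image (a i) with hs
  have hcard : s.card = i := by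
    rw [hs, Finset.card_image_of_injOn (mt_injOn ht h1 h2), Nat.card_Icc]
    omega
  have hkc : k < s.card := by omega
  apply le_antisymm
  · rw [kth_le_iff hkc]
    have hsub : (Finset.Icc (n-i) (n-i+k)).image (a i) ⊆ s.filter (· ≤ a i (n-i+k)) := by
      intro x hx
      rw [Finset.mem_image] at hx
      obtain ⟨j, hj, rfl⟩ := hx
      rw [Finset.mem_Icc] at hj
      rw [Finset.mem_filter]
      constructor
      · rw [hs, Finset.mem_image]
        exact ⟨j, Finset.mem_Icc.2 ⟨hj.1, by omega⟩, rfl⟩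
      · exact mt_row_mono ht h1 h2 hj.1 hj.2 (by omega)
    have hc1 : ((Finset.Icc (n-i) (n-i+k)).image (a i)).card = k + 1 := by
      rw [Finset.card_image_of_injOn ((mt_injOn ht h1 h2).mono (by
        rw [Finset.coe_subset]
        intro x hx
        rw [Finset.mem_Icc] at hx ⊢
        omega)), Nat.card_Icc]
      omega
    calc k + 1 = ((Finset.Icc (n-i) (n-i+k)).image (a i)).card := hc1.symm
      _ ≤ (s.filter (· ≤ a i (n-i+k))).card := Finset.card_le_card hsub
  · set c := kth s k with hc
    have hcnt := (kth_le_iff hkc c).1 le_rfl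
    rw [hs, Finset.filter_image] at hcnt
    have hTle := Finset.card_image_le
      (s := (Finset.Icc (n-i) (n-1)).filter fun j => a i j ≤ c) (f := a i)
    by_contra hlt
    push_neg at hlt
    have hsubT : ((Finset.Icc (n-i) (n-1)).filter fun j => a i j ≤ c)
        ⊆ Finset.Ico (n-i) (n-i+k) := by
      intro j hj
      rw [Finset.mem_filter, Finset.mem_Icc] at hj
      rw [Finset.mem_Ico]
      refine ⟨hj.1.1, ?_⟩
      by_contra hjk
      push_neg at hjk
      have : a i (n-i+k) ≤ a i j := mt_row_mono ht h1 h2 (by omega) hjk hj.1.2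
      omega
    have := Finset.card_le_card hsubT
    rw [Nat.card_Ico] at this
    omega

lemma rset_toASM (hn : 1 ≤ n) (ht : IsMonotoneTriangle n a) {i : ℕ} (h1 : 1 ≤ i) (h2 : i ≤ n) :
    rset n (toASM n a) i = (Finset.Icc (n-i) (n-1)).image (a i) := by
  classical
  rw [rset, ← rowInd_filter_eq ht h1 h2]
  apply Finset.filter_congr
  intro c hc
  rw [Finset.mem_Icc] at hc
  rw [colS, sum_toASM_col hn h1 h2 hc.1 hc.2]

lemma left_round (hn : 1 ≤ n) (ht : IsMonotoneTriangle n a) : toMT n (toASM n a) = a := by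
  funext i j
  by_cases h : 1 ≤ i ∧ i ≤ n ∧ n - i ≤ j ∧ j ≤ n - 1
  · rw [toMT, if_pos h, rset_toASM hn ht h.1 h.2.1,
      kth_image ht h.1 h.2.1 (by omega), show n - i + (j - (n - i)) = j by omega]
  · rw [toMT, if_neg h, ht.1 i j h]

end Round1

section Round2

variable {n : ℕ} {A : ℕ → ℕ → ℤ}

lemma rowInd_toMT (hn : 1 ≤ n) (hA : IsASM n A) {i c : ℕ} (h2 : i ≤ n) (h3 : 1 ≤ c)
    (h4 : c ≤ n) : rowInd n (toMT n A) i c = colS A i c := by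
  rcases Nat.eq_zero_or_pos i with h | h
  · subst h
    rw [rowInd_zero hn, colS]
    simp
  · have hmem : (∃ j, n - i ≤ j ∧ j ≤ n - 1 ∧ toMT n A i j = c) ↔ c ∈ rset n A i := by
      constructor
      · rintro ⟨j, hj1, hj2, rfl⟩
        exact toMT_mem hA ⟨h, h2, hj1, hj2⟩
      · intro hc
        obtain ⟨k, hk, hkth⟩ := mem_iff_kth.1 hc
        rw [rset_card hA h2] at hk
        refine ⟨n - i + k, by omega, by omega, ?_⟩
        rw [toMT, if_pos ⟨h, h2, by omega, by omega⟩,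
          show n - i + k - (n - i) = k by omega, hkth]
    have hcolmem : c ∈ rset n A i ↔ colS A i c = 1 := by
      rw [rset, Finset.mem_filter, Finset.mem_Icc]
      constructor
      · exact fun hx => hx.2
      · exact fun hx => ⟨⟨h3, h4⟩, hx⟩
    rcases colS_cases hA h2 h3 h4 with h0 | h1
    · rw [h0]
      rcases rowInd_cases (a := toMT n A) i c with hr | hr
      · exact hr
      · exfalso
        have := hcolmem.1 (hmem.1 ((rowInd_mem hn).1 hr))
        omega
    · rw [h1, rowInd_mem hn]
      exact hmem.2 (hcolmem.2 h1)

lemma right_round (hn : 1 ≤ n) (hA : IsASM n A) : toASM n (toMT n A) = A := by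
  funext i c
  by_cases h : 1 ≤ i ∧ i ≤ n ∧ 1 ≤ c ∧ c ≤ n
  · obtain ⟨h1, h2, h3, h4⟩ := h
    rw [toASM, if_pos ⟨h1, h2, h3, h4⟩, rowInd_toMT hn hA h2 h3 h4,
      rowInd_toMT hn hA (by omega) h3 h4]
    have hstep : colS A i c = colS A (i-1) c + A i c := by
      conv_lhs => rw [show i = (i-1)+1 by omega]
      rw [colS_succ, show (i-1)+1 = i by omega]
    omega
  · rw [toASM, if_neg h, hA.1 i c h]

end Round2

/-- Monotone triangles of order `n` are in bijection with `n × n` alternating sign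
matrices, where row `i` of the monotone triangle lists exactly those columns whose
partial column sums (from the top) through row `i` equal `1`. -/
theorem stmt14 (n : ℕ) (hn : 1 ≤ n) :
    ∃ e : {a : ℕ → ℕ → ℕ // IsMonotoneTriangle n a} ≃ {A : ℕ → ℕ → ℤ // IsASM n A},
      ∀ t : {a : ℕ → ℕ → ℕ // IsMonotoneTriangle n a}, ∀ i c,
        1 ≤ i → i ≤ n → 1 ≤ c → c ≤ n →
        ((∑ i' ∈ Finset.Icc 1 i, (e t).1 i' c) = 1 ↔
          ∃ j, n - i ≤ j ∧ j ≤ n - 1 ∧ t.1 i j = c) := by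
  refine ⟨⟨fun t => ⟨toASM n t.1, isASM_toASM hn t.2⟩,
    fun T => ⟨toMT n T.1, isMT_toMT hn T.2⟩,
    fun t => Subtype.ext (left_round hn t.2),
    fun T => Subtype.ext (right_round hn T.2)⟩, ?_⟩
  intro t i c h1 h2 h3 h4
  show (∑ i' ∈ Finset.Icc 1 i, toASM n t.1 i' c) = 1 ↔ _
  rw [sum_toASM_col hn h1 h2 h3 h4, rowInd_mem hn]
end

section
/- For n ≥ 4, the poset on permutations of {1,...,n} given by componentwise comparison of their permutation magog triangles (equivalently, the induced subposet T_n^Perm of the componentwise order on magog triangles restricted to permutation magog triangles) is not a lattice. For n ≤ 3 it is a lattice. -/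
/-- A magog triangle of order `n`: rows `1 ≤ i ≤ n`, columns `n - i ≤ j ≤ n - 1`
(entries outside are `0`), bottom row `α n j = j + 1`, entries at most `n`, rows strictly
increasing, with `α (i+1) (j-1) ≤ α i j` and `α (i+1) j ≤ α i j + 1`. -/
def IsMagog (n : ℕ) (α : ℕ → ℕ → ℕ) : Prop :=
  (∀ i j, ¬(1 ≤ i ∧ i ≤ n ∧ n - i ≤ j ∧ j ≤ n - 1) → α i j = 0) ∧
  (∀ j, j ≤ n - 1 → α n j = j + 1) ∧
  (∀ i j, 1 ≤ i → i ≤ n → n - i ≤ j → j ≤ n - 1 → α i j ≤ n) ∧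
  (∀ i j, 1 ≤ i → i + 1 ≤ n → n - i ≤ j → j ≤ n - 1 →
    α (i + 1) (j - 1) ≤ α i j ∧ α (i + 1) j ≤ α i j + 1) ∧
  (∀ i j, 1 ≤ i → i ≤ n → n - i ≤ j → j + 1 ≤ n - 1 → α i j < α i (j + 1))

/-- A permutation magog triangle: a magog triangle with no entry `α i j` and `k ≥ 0`
such that `α (i+1) j ≤ α i j`, `α (i+1) j = α (i+k+1) (j-k)`, and
`α (i+k+1) (j-k-1) + 1 < α (i+k+1) (j-k)`. -/
def IsPermMagog (n : ℕ) (α : ℕ → ℕ → ℕ) : Prop :=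
  IsMagog n α ∧
  ¬ ∃ i j k, 1 ≤ i ∧ i + k + 1 ≤ n ∧ n - i ≤ j ∧ j ≤ n - 1 ∧
      α (i + 1) j ≤ α i j ∧ α (i + 1) j = α (i + k + 1) (j - k) ∧
      α (i + k + 1) (j - (k + 1)) + 1 < α (i + k + 1) (j - k)

def tri (n t a b : ℕ) : ℕ → ℕ → ℕ := fun i j =>
  if 1 ≤ i ∧ i ≤ n ∧ n - i ≤ j ∧ j ≤ n - 1 then
    if i = 1 then t else if i = 2 then (if j = n - 1 then b else a) else i + j + 1 - n
  else 0

lemma tri_magog (n t a b : ℕ) (hn : 3 ≤ n) (ha1 : 1 ≤ a) (hab : a < b)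
    (hat : a ≤ t) (hbt : b ≤ t + 1) (htn : t ≤ n) (hbn : b ≤ n) :
    IsMagog n (tri n t a b) := by
  refine ⟨?_, ?_, ?_, ?_, ?_⟩
  · intro i j h; simp only [tri, if_neg h]
  · intro j hj; simp only [tri]; split_ifs <;> omega
  · intro i j h1 h2 h3 h4; simp only [tri]; split_ifs <;> omega
  · intro i j h1 h2 h3 h4; simp only [tri]; split_ifs <;> omega
  · intro i j h1 h2 h3 h4; simp only [tri]; split_ifs <;> omega

lemma tri_val1 (n t a b : ℕ) (hn : 1 ≤ n) : tri n t a b 1 (n - 1) = t := by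
  simp only [tri]; split_ifs <;> omega

lemma tri_val2b (n t a b : ℕ) (hn : 2 ≤ n) : tri n t a b 2 (n - 1) = b := by
  simp only [tri]; split_ifs <;> omega

lemma tri_val2a (n t a b : ℕ) (hn : 2 ≤ n) : tri n t a b 2 (n - 2) = a := by
  simp only [tri]; split_ifs <;> omega

lemma tri_val_ge3 (n t a b i j : ℕ) (h3i : 3 ≤ i) (hin : i ≤ n) (hj1 : n - i ≤ j)
    (hj2 : j ≤ n - 1) : tri n t a b i j = i + j + 1 - n := by
  simp only [tri]; split_ifs <;> omega

lemma tri_notbad (n t a b : ℕ) (hn : 3 ≤ n) (hok : b ≤ a + 1 ∨ t < b) :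
    ¬ ∃ i j k, 1 ≤ i ∧ i + k + 1 ≤ n ∧ n - i ≤ j ∧ j ≤ n - 1 ∧
      tri n t a b (i + 1) j ≤ tri n t a b i j ∧
      tri n t a b (i + 1) j = tri n t a b (i + k + 1) (j - k) ∧
      tri n t a b (i + k + 1) (j - (k + 1)) + 1 < tri n t a b (i + k + 1) (j - k) := by
  rintro ⟨i, j, k, h1, h2, h3, h4, h5, h6, h7⟩
  rcases Nat.lt_or_ge (i + k + 1) 3 with hr | hr
  · -- i = 1, k = 0, j = n - 1
    obtain rfl : i = 1 := by omega
    obtain rfl : k = 0 := by omega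
    obtain rfl : j = n - 1 := by omega
    rw [show (1:ℕ) + 1 = 2 from rfl] at h5
    rw [tri_val2b n t a b (by omega), tri_val1 n t a b (by omega)] at h5
    rw [show (1:ℕ) + 0 + 1 = 2 from rfl, show n - 1 - (0 + 1) = n - 2 by omega,
      show n - 1 - 0 = n - 1 by omega] at h7
    rw [tri_val2a n t a b (by omega), tri_val2b n t a b (by omega)] at h7
    omega
  · have e1 := tri_val_ge3 n t a b (i + k + 1) (j - k) (by omega) h2 (by omega) (by omega)
    have e2 := tri_val_ge3 n t a b (i + k + 1) (j - (k + 1)) (by omega) h2 (by omega) (by omega)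
    rw [e1, e2] at h7
    omega
lemma isMagog_max {n : ℕ} {α β : ℕ → ℕ → ℕ} (hα : IsMagog n α) (hβ : IsMagog n β) :
    IsMagog n (fun i j => max (α i j) (β i j)) := by
  obtain ⟨a1, a2, a3, a4, a5⟩ := hα
  obtain ⟨b1, b2, b3, b4, b5⟩ := hβ
  refine ⟨?_, ?_, ?_, ?_, ?_⟩
  · intro i j h; simp only; rw [a1 i j h, b1 i j h]; simp
  · intro j hj; simp only; rw [a2 j hj, b2 j hj, max_self]
  · intro i j h1 h2 h3 h4
    have := a3 i j h1 h2 h3 h4; have := b3 i j h1 h2 h3 h4; simp only; omega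
  · intro i j h1 h2 h3 h4
    have := a4 i j h1 h2 h3 h4; have := b4 i j h1 h2 h3 h4; simp only; omega
  · intro i j h1 h2 h3 h4
    have := a5 i j h1 h2 h3 h4; have := b5 i j h1 h2 h3 h4; simp only; omega

lemma isMagog_min {n : ℕ} {α β : ℕ → ℕ → ℕ} (hα : IsMagog n α) (hβ : IsMagog n β) :
    IsMagog n (fun i j => min (α i j) (β i j)) := by
  obtain ⟨a1, a2, a3, a4, a5⟩ := hα
  obtain ⟨b1, b2, b3, b4, b5⟩ := hβ
  refine ⟨?_, ?_, ?_, ?_, ?_⟩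
  · intro i j h; simp only; rw [a1 i j h, b1 i j h]; simp
  · intro j hj; simp only; rw [a2 j hj, b2 j hj, min_self]
  · intro i j h1 h2 h3 h4
    have := a3 i j h1 h2 h3 h4; have := b3 i j h1 h2 h3 h4; simp only; omega
  · intro i j h1 h2 h3 h4
    have := a4 i j h1 h2 h3 h4; have := b4 i j h1 h2 h3 h4; simp only; omega
  · intro i j h1 h2 h3 h4
    have := a5 i j h1 h2 h3 h4; have := b5 i j h1 h2 h3 h4; simp only; omega

lemma small_perm {n : ℕ} (hn : n ≤ 2) {α : ℕ → ℕ → ℕ} (hm : IsMagog n α) :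
    IsPermMagog n α := by
  refine ⟨hm, ?_⟩
  rintro ⟨i, j, k, h1, h2, h3, h4, h5, h6, h7⟩
  obtain rfl : n = 2 := by omega
  obtain rfl : i = 1 := by omega
  obtain rfl : k = 0 := by omega
  obtain rfl : j = 1 := by omega
  have e0 := hm.2.1 0 (by norm_num)
  have e1 := hm.2.1 1 (by norm_num)
  norm_num at h7
  omega

lemma facts3 {α : ℕ → ℕ → ℕ} (h : IsPermMagog 3 α) :
    α 3 0 = 1 ∧ α 3 1 = 2 ∧ α 3 2 = 3 ∧ 1 ≤ α 2 1 ∧ α 2 1 < α 2 2 ∧ α 2 2 ≤ 3 ∧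
    α 2 1 ≤ α 1 2 ∧ α 2 2 ≤ α 1 2 + 1 ∧ α 1 2 ≤ 3 ∧
    ¬(α 2 2 ≤ α 1 2 ∧ α 2 1 + 1 < α 2 2) := by
  obtain ⟨⟨hz, hbot, hle, hstep, hrow⟩, hperm⟩ := h
  have e0 := hbot 0 (by norm_num)
  have e1 := hbot 1 (by norm_num)
  have e2 := hbot 2 (by norm_num)
  have s21 := hstep 2 1 (by norm_num) (by norm_num) (by norm_num) (by norm_num)
  have s12 := hstep 1 2 (by norm_num) (by norm_num) (by norm_num) (by norm_num)
  have r2 := hrow 2 1 (by norm_num) (by norm_num) (by norm_num) (by norm_num)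
  have l22 := hle 2 2 (by norm_num) (by norm_num) (by norm_num) (by norm_num)
  have l12 := hle 1 2 (by norm_num) (by norm_num) (by norm_num) (by norm_num)
  norm_num at s21 s12 r2 l22 l12 e0 e1 e2
  have hb : ¬(α 2 2 ≤ α 1 2 ∧ α 2 1 + 1 < α 2 2) := by
    rintro ⟨hb1, hb2⟩
    exact hperm ⟨1, 2, 0, by norm_num, by norm_num, by norm_num, by norm_num, hb1, rfl, hb2⟩
  exact ⟨e0, e1, e2, by omega, r2, l22, by omega, by omega, l12, hb⟩

lemma perm3_of {α : ℕ → ℕ → ℕ} (hm : IsMagog 3 α)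
    (hnb : ¬(α 2 2 ≤ α 1 2 ∧ α 2 1 + 1 < α 2 2)) : IsPermMagog 3 α := by
  refine ⟨hm, ?_⟩
  rintro ⟨i, j, k, h1, h2, h3, h4, h5, h6, h7⟩
  have e0 := hm.2.1 0 (by norm_num)
  have e1 := hm.2.1 1 (by norm_num)
  have e2 := hm.2.1 2 (by norm_num)
  norm_num at e0 e1 e2
  have hi : i = 1 ∨ i = 2 := by omega
  rcases hi with rfl | rfl
  · obtain rfl : j = 2 := by omega
    have hk : k = 0 ∨ k = 1 := by omega
    rcases hk with rfl | rfl
    · norm_num at h5 h7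
      exact hnb ⟨h5, h7⟩
    · norm_num at h7
      omega
  · obtain rfl : k = 0 := by omega
    have hj : j = 1 ∨ j = 2 := by omega
    rcases hj with rfl | rfl <;> norm_num at h7 <;> omega
/-- Componentwise comparison of (permutation magog) triangles. -/
def PermMagogLe (n : ℕ) (x y : {α : ℕ → ℕ → ℕ // IsPermMagog n α}) : Prop :=
  ∀ i j, x.1 i j ≤ y.1 i j

/-- `T_n^Perm` is a lattice: every pair has a least upper bound and a greatest lower
bound. -/
def PermMagogIsLattice (n : ℕ) : Prop :=
  ∀ x y : {α : ℕ → ℕ → ℕ // IsPermMagog n α},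
    (∃ z, (PermMagogLe n x z ∧ PermMagogLe n y z) ∧
      ∀ w, PermMagogLe n x w → PermMagogLe n y w → PermMagogLe n z w) ∧
    (∃ z, (PermMagogLe n z x ∧ PermMagogLe n z y) ∧
      ∀ w, PermMagogLe n w x → PermMagogLe n w y → PermMagogLe n w z)

lemma lattice_le2 {n : ℕ} (hn : n ≤ 2) : PermMagogIsLattice n := by
  intro x y
  constructor
  · refine ⟨⟨fun i j => max (x.1 i j) (y.1 i j), small_perm hn (isMagog_max x.2.1 y.2.1)⟩,
      ⟨fun i j => le_max_left _ _, fun i j => le_max_right _ _⟩, ?_⟩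
    intro w h1 h2 i j
    exact max_le (h1 i j) (h2 i j)
  · refine ⟨⟨fun i j => min (x.1 i j) (y.1 i j), small_perm hn (isMagog_min x.2.1 y.2.1)⟩,
      ⟨fun i j => min_le_left _ _, fun i j => min_le_right _ _⟩, ?_⟩
    intro w h1 h2 i j
    exact le_min (h1 i j) (h2 i j)

lemma lattice_3 : PermMagogIsLattice 3 := by
  intro x y
  obtain ⟨xe0, xe1, xe2, x21ge, xrow, x22le, xs1, xs2, x12le, xnb⟩ := facts3 x.2
  obtain ⟨ye0, ye1, ye2, y21ge, yrow, y22le, ys1, ys2, y12le, ynb⟩ := facts3 y.2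
  constructor
  · -- join
    by_cases hbad : max (x.1 2 2) (y.1 2 2) ≤ max (x.1 1 2) (y.1 1 2) ∧
        max (x.1 2 1) (y.1 2 1) + 1 < max (x.1 2 2) (y.1 2 2)
    · -- use tri 3 3 2 3
      have hF : IsPermMagog 3 (tri 3 3 2 3) :=
        ⟨tri_magog 3 3 2 3 (by norm_num) (by norm_num) (by norm_num) (by norm_num)
          (by norm_num) (by norm_num) (by norm_num),
         tri_notbad 3 3 2 3 (by norm_num) (Or.inl (by norm_num))⟩
      refine ⟨⟨tri 3 3 2 3, hF⟩, ⟨?_, ?_⟩, ?_⟩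
      · intro i j
        by_cases hd : 1 ≤ i ∧ i ≤ 3 ∧ 3 - i ≤ j ∧ j ≤ 3 - 1
        · obtain ⟨hd1, hd2, hd3, hd4⟩ := hd
          interval_cases i <;> interval_cases j <;> simp [tri] <;> omega
        · rw [x.2.1.1 i j hd]; exact Nat.zero_le _
      · intro i j
        by_cases hd : 1 ≤ i ∧ i ≤ 3 ∧ 3 - i ≤ j ∧ j ≤ 3 - 1
        · obtain ⟨hd1, hd2, hd3, hd4⟩ := hd
          interval_cases i <;> interval_cases j <;> simp [tri] <;> omega
        · rw [y.2.1.1 i j hd]; exact Nat.zero_le _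
      · intro w h1 h2 i j
        obtain ⟨we0, we1, we2, w21ge, wrow, w22le, ws1, ws2, w12le, wnb⟩ := facts3 w.2
        have a1 := h1 1 2; have a2 := h2 1 2
        have a3 := h1 2 2; have a4 := h2 2 2
        have a5 := h1 2 1; have a6 := h2 2 1
        by_cases hd : 1 ≤ i ∧ i ≤ 3 ∧ 3 - i ≤ j ∧ j ≤ 3 - 1
        · obtain ⟨hd1, hd2, hd3, hd4⟩ := hd
          interval_cases i <;> interval_cases j <;> simp [tri] <;> omega
        · simp only [tri, if_neg hd]; exact Nat.zero_le _
    · refine ⟨⟨fun i j => max (x.1 i j) (y.1 i j),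
        perm3_of (isMagog_max x.2.1 y.2.1) hbad⟩,
        ⟨fun i j => le_max_left _ _, fun i j => le_max_right _ _⟩, ?_⟩
      intro w h1 h2 i j
      exact max_le (h1 i j) (h2 i j)
  · -- meet
    have hnb : ¬(min (x.1 2 2) (y.1 2 2) ≤ min (x.1 1 2) (y.1 1 2) ∧
        min (x.1 2 1) (y.1 2 1) + 1 < min (x.1 2 2) (y.1 2 2)) := by omega
    refine ⟨⟨fun i j => min (x.1 i j) (y.1 i j),
      perm3_of (isMagog_min x.2.1 y.2.1) hnb⟩,
      ⟨fun i j => min_le_left _ _, fun i j => min_le_right _ _⟩, ?_⟩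
    intro w h1 h2 i j
    exact le_min (h1 i j) (h2 i j)

lemma tri_mono {n t a b t' a' b' : ℕ} (ht : t ≤ t') (ha : a ≤ a') (hb : b ≤ b') :
    ∀ i j, tri n t a b i j ≤ tri n t' a' b' i j := by
  intro i j; simp only [tri]; split_ifs <;> omega

lemma tri_max {n : ℕ} : ∀ i j,
    max (tri n 3 1 2 i j) (tri n 2 1 3 i j) = tri n 3 1 3 i j := by
  intro i j; simp only [tri]; split_ifs <;> omega

lemma tri_min {n : ℕ} : ∀ i j,
    min (tri n 3 1 4 i j) (tri n 3 2 3 i j) = tri n 3 1 3 i j := by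
  intro i j; simp only [tri]; split_ifs <;> omega

/-- The poset `T_n^Perm` of permutation magog triangles under componentwise comparison is
a lattice for `n ≤ 3` but not for `n ≥ 4`. -/
theorem stmt16 (n : ℕ) :
    (n ≤ 3 → PermMagogIsLattice n) ∧ (4 ≤ n → ¬ PermMagogIsLattice n) := by
  constructor
  · intro hn
    rcases Nat.lt_or_ge n 3 with h | h
    · exact lattice_le2 (by omega)
    · obtain rfl : n = 3 := by omega
      exact lattice_3
  · intro h4 hlat
    have h3 : (3:ℕ) ≤ n := by omega
    have hx : IsPermMagog n (tri n 3 1 2) :=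
      ⟨tri_magog n 3 1 2 h3 (by norm_num) (by norm_num) (by norm_num) (by norm_num)
        (by omega) (by omega), tri_notbad n 3 1 2 h3 (Or.inl (by norm_num))⟩
    have hy : IsPermMagog n (tri n 2 1 3) :=
      ⟨tri_magog n 2 1 3 h3 (by norm_num) (by norm_num) (by norm_num) (by norm_num)
        (by omega) (by omega), tri_notbad n 2 1 3 h3 (Or.inr (by norm_num))⟩
    have hz1 : IsPermMagog n (tri n 3 1 4) :=
      ⟨tri_magog n 3 1 4 h3 (by norm_num) (by norm_num) (by norm_num) (by norm_num)
        (by omega) (by omega), tri_notbad n 3 1 4 h3 (Or.inr (by norm_num))⟩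
    have hz2 : IsPermMagog n (tri n 3 2 3) :=
      ⟨tri_magog n 3 2 3 h3 (by norm_num) (by norm_num) (by norm_num) (by norm_num)
        (by omega) (by omega), tri_notbad n 3 2 3 h3 (Or.inl (by norm_num))⟩
    obtain ⟨⟨z, ⟨hxz, hyz⟩, hmin⟩, -⟩ := hlat ⟨tri n 3 1 2, hx⟩ ⟨tri n 2 1 3, hy⟩
    have hu1 : PermMagogLe n z ⟨tri n 3 1 4, hz1⟩ :=
      hmin _ (tri_mono (le_refl 3) (le_refl 1) (by norm_num))
        (tri_mono (by norm_num) (le_refl 1) (by norm_num))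
    have hu2 : PermMagogLe n z ⟨tri n 3 2 3, hz2⟩ :=
      hmin _ (tri_mono (le_refl 3) (by norm_num) (by norm_num))
        (tri_mono (by norm_num) (by norm_num) (le_refl 3))
    have hzm : ∀ i j, z.1 i j = tri n 3 1 3 i j := by
      intro i j
      have e1 := hxz i j
      have e2 := hyz i j
      have e3 := hu1 i j
      have e4 := hu2 i j
      have m1 := tri_max (n := n) i j
      have m2 := tri_min (n := n) i j
      simp only at e1 e2 e3 e4
      omega
    refine z.2.2 ⟨1, n - 1, 0, le_refl 1, by omega, le_refl _, le_refl _, ?_, ?_, ?_⟩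
    · rw [hzm, hzm, show (1:ℕ) + 1 = 2 from rfl,
        tri_val2b n 3 1 3 (by omega), tri_val1 n 3 1 3 (by omega)]
    · rw [hzm, hzm]
      norm_num
    · rw [hzm, hzm, show (1:ℕ) + 0 + 1 = 2 from rfl, show n - 1 - (0 + 1) = n - 2 by omega,
        show n - 1 - 0 = n - 1 by omega,
        tri_val2a n 3 1 3 (by omega), tri_val2b n 3 1 3 (by omega)]
      norm_num
end

section
/- For n ≥ 4, the poset TBool_n of all TSSCPP boolean triangles of order n ordered by reverse componentwise comparison is not a lattice; for n ≤ 3 it is a lattice. -/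
/-- A TSSCPP boolean triangle of order `n`. -/
def IsBoolTri (n : ℕ) (b : ℕ → ℕ → ℕ) : Prop :=
  (∀ i j, ¬(1 ≤ i ∧ i ≤ n - 1 ∧ n - i ≤ j ∧ j ≤ n - 1) → b i j = 0) ∧
  (∀ i j, b i j ≤ 1) ∧
  (∀ j i', 1 ≤ j → i' ≤ n - 1 →
    ∑ i ∈ Finset.Icc j i', b i (n - j) ≤ 1 + ∑ i ∈ Finset.Icc (j + 1) i', b i (n - j - 1))

/-- Reverse componentwise comparison of boolean triangles: `x ≤ y` iff `x i j ≥ y i j`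
for all entries. -/
def BoolRevLe (n : ℕ) (x y : {b : ℕ → ℕ → ℕ // IsBoolTri n b}) : Prop :=
  ∀ i j, y.1 i j ≤ x.1 i j

/-- `TBool_n` is a lattice: every pair has a least upper bound and a greatest lower
bound (with respect to reverse componentwise comparison). -/
def TBoolIsLattice (n : ℕ) : Prop :=
  ∀ x y : {b : ℕ → ℕ → ℕ // IsBoolTri n b},
    (∃ z, (BoolRevLe n x z ∧ BoolRevLe n y z) ∧
      ∀ w, BoolRevLe n x w → BoolRevLe n y w → BoolRevLe n z w) ∧
    (∃ z, (BoolRevLe n z x ∧ BoolRevLe n z y) ∧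
      ∀ w, BoolRevLe n w x → BoolRevLe n w y → BoolRevLe n w z)

/- ### Auxiliary lemmas -/

private lemma sum_le_ind (f : ℕ → ℕ) (s : Finset ℕ) (a : ℕ)
    (h : ∀ i ∈ s, f i ≤ if i = a then 1 else 0) : ∑ i ∈ s, f i ≤ 1 := by
  calc ∑ i ∈ s, f i ≤ ∑ i ∈ s, (if i = a then 1 else 0) := Finset.sum_le_sum h
    _ ≤ 1 := by
        rw [Finset.sum_ite_eq' s a (fun _ => 1)]
        split <;> omega

private lemma sum_le_ind2 (f : ℕ → ℕ) (s : Finset ℕ) (a b : ℕ)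
    (h : ∀ i ∈ s, f i ≤ (if i = a then 1 else 0) + (if i = b then 1 else 0)) :
    ∑ i ∈ s, f i ≤ 2 := by
  calc ∑ i ∈ s, f i
      ≤ ∑ i ∈ s, ((if i = a then 1 else 0) + (if i = b then 1 else 0)) := Finset.sum_le_sum h
    _ = (∑ i ∈ s, (if i = a then 1 else 0)) + ∑ i ∈ s, (if i = b then 1 else 0) :=
        Finset.sum_add_distrib
    _ ≤ 2 := by
        rw [Finset.sum_ite_eq' s a (fun _ => 1), Finset.sum_ite_eq' s b (fun _ => 1)]
        split <;> split <;> omega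

/-- The counterexample triangles for `n ≥ 4`. -/
private def xT (n : ℕ) : ℕ → ℕ → ℕ := fun i j => if i = 3 ∧ j = n - 1 then 1 else 0
private def yT (n : ℕ) : ℕ → ℕ → ℕ := fun i j => if i = 2 ∧ j = n - 1 then 1 else 0
private def w1T (n : ℕ) : ℕ → ℕ → ℕ := fun i j =>
  if (i = 2 ∧ j = n - 1) ∨ (i = 3 ∧ j = n - 1) ∨ (i = 3 ∧ j = n - 2) then 1 else 0
private def w2T (n : ℕ) : ℕ → ℕ → ℕ := fun i j =>
  if (i = 2 ∧ j = n - 1) ∨ (i = 3 ∧ j = n - 1) ∨ (i = 2 ∧ j = n - 2) then 1 else 0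

private lemma xT_valid (n : ℕ) (hn : 4 ≤ n) : IsBoolTri n (xT n) := by
  refine ⟨?_, ?_, ?_⟩
  · intro i j h
    simp only [xT]
    split_ifs with hc
    · omega
    · rfl
  · intro i j; simp only [xT]; split <;> omega
  · intro j i' hj hi'
    have : ∑ i ∈ Finset.Icc j i', xT n i (n - j) ≤ 1 := by
      apply sum_le_ind _ _ 3
      intro i _
      simp only [xT]; split_ifs <;> omega
    omega

private lemma yT_valid (n : ℕ) (hn : 4 ≤ n) : IsBoolTri n (yT n) := by
  refine ⟨?_, ?_, ?_⟩
  · intro i j h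
    simp only [yT]
    split_ifs with hc
    · omega
    · rfl
  · intro i j; simp only [yT]; split <;> omega
  · intro j i' hj hi'
    have : ∑ i ∈ Finset.Icc j i', yT n i (n - j) ≤ 1 := by
      apply sum_le_ind _ _ 2
      intro i _
      simp only [yT]; split_ifs <;> omega
    omega

private lemma w1T_valid (n : ℕ) (hn : 4 ≤ n) : IsBoolTri n (w1T n) := by
  refine ⟨?_, ?_, ?_⟩
  · intro i j h
    simp only [w1T]
    split_ifs with hc
    · omega
    · rfl
  · intro i j; simp only [w1T]; split <;> omega
  · intro j i' hj hi'
    rcases eq_or_lt_of_le hj with h1 | h2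
    · -- j = 1
      subst h1
      by_cases h3 : 3 ≤ i'
      · have hL : ∑ i ∈ Finset.Icc 1 i', w1T n i (n - 1) ≤ 2 := by
          apply sum_le_ind2 _ _ 2 3
          intro i _
          simp only [w1T]; split_ifs <;> omega
        have hR : 1 ≤ ∑ i ∈ Finset.Icc (1 + 1) i', w1T n i (n - 1 - 1) := by
          have hm : 3 ∈ Finset.Icc (1 + 1) i' := by
            simp [Finset.mem_Icc]; omega
          have h0 : w1T n 3 (n - 1 - 1) ≤ ∑ i ∈ Finset.Icc (1 + 1) i', w1T n i (n - 1 - 1) :=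
            Finset.single_le_sum (f := fun i => w1T n i (n - 1 - 1))
              (fun i _ => Nat.zero_le _) hm
          have hv : w1T n 3 (n - 1 - 1) = 1 := by
            simp [w1T, show n - 1 - 1 = n - 2 from by omega]
          omega
        omega
      · have hL : ∑ i ∈ Finset.Icc 1 i', w1T n i (n - 1) ≤ 1 := by
          apply sum_le_ind _ _ 2
          intro i hi
          simp only [Finset.mem_Icc] at hi
          simp only [w1T]; split_ifs <;> omega
        omega
    · rcases eq_or_lt_of_le (Nat.succ_le_of_lt h2) with h1 | h2
      · -- j = 2
        have hj2 : j = 2 := by omega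
        subst hj2
        have hL : ∑ i ∈ Finset.Icc 2 i', w1T n i (n - 2) ≤ 1 := by
          apply sum_le_ind _ _ 3
          intro i _
          simp only [w1T]; split_ifs <;> omega
        omega
      · -- j ≥ 3
        have hL : ∑ i ∈ Finset.Icc j i', w1T n i (n - j) = 0 := by
          apply Finset.sum_eq_zero
          intro i _
          simp only [w1T]; split_ifs <;> omega
        omega

private lemma w2T_valid (n : ℕ) (hn : 4 ≤ n) : IsBoolTri n (w2T n) := by
  refine ⟨?_, ?_, ?_⟩
  · intro i j h
    simp only [w2T]
    split_ifs with hc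
    · omega
    · rfl
  · intro i j; simp only [w2T]; split <;> omega
  · intro j i' hj hi'
    rcases eq_or_lt_of_le hj with h1 | h2
    · -- j = 1
      subst h1
      by_cases h3 : 3 ≤ i'
      · have hL : ∑ i ∈ Finset.Icc 1 i', w2T n i (n - 1) ≤ 2 := by
          apply sum_le_ind2 _ _ 2 3
          intro i _
          simp only [w2T]; split_ifs <;> omega
        have hR : 1 ≤ ∑ i ∈ Finset.Icc (1 + 1) i', w2T n i (n - 1 - 1) := by
          have hm : 2 ∈ Finset.Icc (1 + 1) i' := by
            simp [Finset.mem_Icc]; omega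
          have h0 : w2T n 2 (n - 1 - 1) ≤ ∑ i ∈ Finset.Icc (1 + 1) i', w2T n i (n - 1 - 1) :=
            Finset.single_le_sum (f := fun i => w2T n i (n - 1 - 1))
              (fun i _ => Nat.zero_le _) hm
          have hv : w2T n 2 (n - 1 - 1) = 1 := by
            simp [w2T, show n - 1 - 1 = n - 2 from by omega]
          omega
        omega
      · have hL : ∑ i ∈ Finset.Icc 1 i', w2T n i (n - 1) ≤ 1 := by
          apply sum_le_ind _ _ 2
          intro i hi
          simp only [Finset.mem_Icc] at hi
          simp only [w2T]; split_ifs <;> omega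
        omega
    · rcases eq_or_lt_of_le (Nat.succ_le_of_lt h2) with h1 | h2
      · -- j = 2
        have hj2 : j = 2 := by omega
        subst hj2
        have hL : ∑ i ∈ Finset.Icc 2 i', w2T n i (n - 2) ≤ 1 := by
          apply sum_le_ind _ _ 2
          intro i _
          simp only [w2T]; split_ifs <;> omega
        omega
      · -- j ≥ 3
        have hL : ∑ i ∈ Finset.Icc j i', w2T n i (n - j) = 0 := by
          apply Finset.sum_eq_zero
          intro i _
          simp only [w2T]; split_ifs <;> omega
        omega


/-- Pointwise min / max and the `n = 3` meet construction. -/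
private def minT (x y : ℕ → ℕ → ℕ) : ℕ → ℕ → ℕ := fun i j => min (x i j) (y i j)
private def maxT (x y : ℕ → ℕ → ℕ) : ℕ → ℕ → ℕ := fun i j => max (x i j) (y i j)
private def fix3 (x y : ℕ → ℕ → ℕ) : ℕ → ℕ → ℕ := fun i j =>
  if i = 2 ∧ j = 1 then
    max (max (x 2 1) (y 2 1)) (min (max (x 1 2) (y 1 2)) (max (x 2 2) (y 2 2)))
  else max (x i j) (y i j)

private lemma minT_valid2 {x y : ℕ → ℕ → ℕ} (hx : IsBoolTri 2 x) (hy : IsBoolTri 2 y) :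
    IsBoolTri 2 (minT x y) := by
  refine ⟨?_, ?_, ?_⟩
  · intro i j h
    simp only [minT]
    rw [hx.1 i j h, hy.1 i j h]
    simp
  · intro i j
    have := hx.2.1 i j
    simp only [minT]; omega
  · intro j i' hj hi'
    rcases Nat.lt_or_ge i' j with hlt | hge
    · rw [Finset.Icc_eq_empty (by omega)]
      simp
    · have hj1 : j = 1 := by omega
      have hi1 : i' = 1 := by omega
      subst hj1; subst hi1
      rw [show Finset.Icc 1 1 = ({1} : Finset ℕ) from rfl, Finset.sum_singleton]
      have := hx.2.1 1 (2 - 1)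
      simp only [minT]
      omega

private lemma maxT_valid2 {x y : ℕ → ℕ → ℕ} (hx : IsBoolTri 2 x) (hy : IsBoolTri 2 y) :
    IsBoolTri 2 (maxT x y) := by
  refine ⟨?_, ?_, ?_⟩
  · intro i j h
    simp only [maxT]
    rw [hx.1 i j h, hy.1 i j h]
    simp
  · intro i j
    have := hx.2.1 i j
    have := hy.2.1 i j
    simp only [maxT]; omega
  · intro j i' hj hi'
    rcases Nat.lt_or_ge i' j with hlt | hge
    · rw [Finset.Icc_eq_empty (by omega)]
      simp
    · have hj1 : j = 1 := by omega
      have hi1 : i' = 1 := by omega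
      subst hj1; subst hi1
      rw [show Finset.Icc 1 1 = ({1} : Finset ℕ) from rfl, Finset.sum_singleton]
      have := hx.2.1 1 (2 - 1)
      have := hy.2.1 1 (2 - 1)
      simp only [maxT]
      omega

private lemma minT_valid3 {x y : ℕ → ℕ → ℕ} (hx : IsBoolTri 3 x) (hy : IsBoolTri 3 y) :
    IsBoolTri 3 (minT x y) := by
  refine ⟨?_, ?_, ?_⟩
  · intro i j h
    simp only [minT]
    rw [hx.1 i j h, hy.1 i j h]
    simp
  · intro i j
    have := hx.2.1 i j
    simp only [minT]; omega
  · intro j i' hj hi'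
    rcases Nat.lt_or_ge i' j with hlt | hge
    · rw [Finset.Icc_eq_empty (by omega)]
      simp
    · have hj2 : j ≤ 2 := by omega
      interval_cases j <;> interval_cases i'
      · -- j = 1, i' = 1
        rw [show Finset.Icc 1 1 = ({1} : Finset ℕ) from rfl, Finset.sum_singleton]
        have := hx.2.1 1 (3 - 1)
        simp only [minT]; omega
      · -- j = 1, i' = 2
        rw [show Finset.Icc 1 2 = ({1, 2} : Finset ℕ) from rfl,
            Finset.sum_pair (by norm_num),
            show Finset.Icc (1 + 1) 2 = ({2} : Finset ℕ) from rfl, Finset.sum_singleton]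
        have hxc := hx.2.2 1 2 (by omega) (by omega)
        have hyc := hy.2.2 1 2 (by omega) (by omega)
        rw [show Finset.Icc 1 2 = ({1, 2} : Finset ℕ) from rfl,
            Finset.sum_pair (by norm_num),
            show Finset.Icc (1 + 1) 2 = ({2} : Finset ℕ) from rfl,
            Finset.sum_singleton] at hxc hyc
        simp only [minT]
        omega
      · -- j = 2, i' = 2
        rw [show Finset.Icc 2 2 = ({2} : Finset ℕ) from rfl, Finset.sum_singleton]
        have := hx.2.1 2 (3 - 2)
        simp only [minT]; omega

private lemma fix3_valid {x y : ℕ → ℕ → ℕ} (hx : IsBoolTri 3 x) (hy : IsBoolTri 3 y) :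
    IsBoolTri 3 (fix3 x y) := by
  have b1 := hx.2.1; have b2 := hy.2.1
  refine ⟨?_, ?_, ?_⟩
  · intro i j h
    simp only [fix3]
    split_ifs with hc
    · exfalso; omega
    · rw [hx.1 i j h, hy.1 i j h]
      simp
  · intro i j
    have := b1 i j; have := b2 i j
    have := b1 1 2; have := b2 1 2
    have := b1 2 2; have := b2 2 2
    have := b1 2 1; have := b2 2 1
    simp only [fix3]
    split_ifs <;> omega
  · intro j i' hj hi'
    rcases Nat.lt_or_ge i' j with hlt | hge
    · rw [Finset.Icc_eq_empty (by omega)]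
      simp
    · have hj2 : j ≤ 2 := by omega
      interval_cases j <;> interval_cases i'
      · -- j = 1, i' = 1 : single entry ≤ 1
        rw [show Finset.Icc 1 1 = ({1} : Finset ℕ) from rfl, Finset.sum_singleton]
        have := b1 1 2; have := b2 1 2
        simp only [fix3]
        norm_num
        omega
      · -- j = 1, i' = 2 : the real constraint
        rw [show Finset.Icc 1 2 = ({1, 2} : Finset ℕ) from rfl,
            Finset.sum_pair (by norm_num),
            show Finset.Icc (1 + 1) 2 = ({2} : Finset ℕ) from rfl, Finset.sum_singleton]
        have := b1 1 2; have := b2 1 2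
        have := b1 2 2; have := b2 2 2
        simp only [fix3, show (3 : ℕ) - 1 = 2 from rfl, show (3 : ℕ) - 1 - 1 = 1 from rfl]
        norm_num
        omega
      · -- j = 2, i' = 2 : single entry ≤ 1
        rw [show Finset.Icc 2 2 = ({2} : Finset ℕ) from rfl, Finset.sum_singleton]
        have := b1 2 1; have := b2 2 1
        have := b1 1 2; have := b2 1 2
        have := b1 2 2; have := b2 2 2
        simp only [fix3, show (3 : ℕ) - 2 = 1 from rfl]
        norm_num
        omega

/-- The poset `TBool_n` of all TSSCPP boolean triangles of order `n`, ordered by reverse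
componentwise comparison, is a lattice for `n ≤ 3` but not for `n ≥ 4`. -/
theorem stmt18 (n : ℕ) :
    (n ≤ 3 → TBoolIsLattice n) ∧ (4 ≤ n → ¬ TBoolIsLattice n) := by
  constructor
  · -- lattice for n ≤ 3
    intro hn
    interval_cases n
    · -- n = 0 : the unique triangle
      intro x y
      have h0 : ∀ (b : {b : ℕ → ℕ → ℕ // IsBoolTri 0 b}) (i j : ℕ), b.1 i j = 0 :=
        fun b i j => b.2.1 i j (by omega)
      refine ⟨⟨x, ⟨fun i j => ?_, fun i j => ?_⟩, fun w _ _ i j => ?_⟩,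
              ⟨x, ⟨fun i j => ?_, fun i j => ?_⟩, fun w _ _ i j => ?_⟩⟩ <;>
        simp [h0]
    · -- n = 1 : the unique triangle
      intro x y
      have h0 : ∀ (b : {b : ℕ → ℕ → ℕ // IsBoolTri 1 b}) (i j : ℕ), b.1 i j = 0 :=
        fun b i j => b.2.1 i j (by omega)
      refine ⟨⟨x, ⟨fun i j => ?_, fun i j => ?_⟩, fun w _ _ i j => ?_⟩,
              ⟨x, ⟨fun i j => ?_, fun i j => ?_⟩, fun w _ _ i j => ?_⟩⟩ <;>
        simp [h0]
    · -- n = 2 : min and max work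
      intro x y
      constructor
      · refine ⟨⟨minT x.1 y.1, minT_valid2 x.2 y.2⟩, ⟨?_, ?_⟩, ?_⟩
        · intro i j; simp only [minT]; omega
        · intro i j; simp only [minT]; omega
        · intro w hwx hwy i j
          have := hwx i j; have := hwy i j
          simp only [minT] at *
          omega
      · refine ⟨⟨maxT x.1 y.1, maxT_valid2 x.2 y.2⟩, ⟨?_, ?_⟩, ?_⟩
        · intro i j; simp only [maxT]; omega
        · intro i j; simp only [maxT]; omega
        · intro w hwx hwy i j
          have := hwx i j; have := hwy i j
          simp only [maxT] at *
          omega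
    · -- n = 3 : min works; max needs a fixup at (2,1)
      intro x y
      constructor
      · refine ⟨⟨minT x.1 y.1, minT_valid3 x.2 y.2⟩, ⟨?_, ?_⟩, ?_⟩
        · intro i j; simp only [minT]; omega
        · intro i j; simp only [minT]; omega
        · intro w hwx hwy i j
          have := hwx i j; have := hwy i j
          simp only [minT] at *
          omega
      · refine ⟨⟨fix3 x.1 y.1, fix3_valid x.2 y.2⟩, ⟨?_, ?_⟩, ?_⟩
        · intro i j
          simp only [fix3]
          split_ifs with hc
          · rcases hc with ⟨rfl, rfl⟩; omega
          · omega
        · intro i j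
          simp only [fix3]
          split_ifs with hc
          · rcases hc with ⟨rfl, rfl⟩; omega
          · omega
        · intro w hwx hwy i j
          simp only [fix3]
          split_ifs with hc
          · rcases hc with ⟨rfl, rfl⟩
            have h1 := hwx 2 1; have h2 := hwy 2 1
            have h3 := hwx 1 2; have h4 := hwy 1 2
            have h5 := hwx 2 2; have h6 := hwy 2 2
            have hx12 := x.2.2.1 1 2; have hy12 := y.2.2.1 1 2
            have hw := w.2.2.2 1 2 (by omega) (by omega)
            rw [show Finset.Icc 1 2 = ({1, 2} : Finset ℕ) from rfl,
                Finset.sum_pair (by norm_num),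
                show Finset.Icc (1 + 1) 2 = ({2} : Finset ℕ) from rfl,
                Finset.sum_singleton] at hw
            simp only [show (3 : ℕ) - 1 = 2 from rfl,
                show (3 : ℕ) - 1 - 1 = 1 from rfl] at hw
            omega
          · have := hwx i j; have := hwy i j
            omega
  · -- not a lattice for n ≥ 4
    intro hn hL
    obtain ⟨-, z, ⟨hzx, hzy⟩, hmin⟩ := hL ⟨xT n, xT_valid n hn⟩ ⟨yT n, yT_valid n hn⟩
    -- z lies above both x and y pointwise, and below w1, w2 pointwise
    have hw1 : BoolRevLe n ⟨w1T n, w1T_valid n hn⟩ ⟨xT n, xT_valid n hn⟩ := by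
      intro i j
      simp only [xT, w1T]
      split_ifs <;> omega
    have hw1' : BoolRevLe n ⟨w1T n, w1T_valid n hn⟩ ⟨yT n, yT_valid n hn⟩ := by
      intro i j
      simp only [yT, w1T]
      split_ifs <;> omega
    have hw2 : BoolRevLe n ⟨w2T n, w2T_valid n hn⟩ ⟨xT n, xT_valid n hn⟩ := by
      intro i j
      simp only [xT, w2T]
      split_ifs <;> omega
    have hw2' : BoolRevLe n ⟨w2T n, w2T_valid n hn⟩ ⟨yT n, yT_valid n hn⟩ := by
      intro i j
      simp only [yT, w2T]
      split_ifs <;> omega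
    have hz1 := hmin _ hw1 hw1'
    have hz2 := hmin _ hw2 hw2'
    -- z 2 (n-1) = 1, z 3 (n-1) = 1
    have hz23 : 1 ≤ z.1 2 (n - 1) := by
      simpa [yT] using hzy 2 (n - 1)
    have hz33 : 1 ≤ z.1 3 (n - 1) := by
      simpa [xT] using hzx 3 (n - 1)
    -- z i (n-2) = 0 for i = 2, 3
    have hz22 : z.1 2 (n - 2) = 0 := by
      have := hz1 2 (n - 2)
      simp only [w1T] at this
      split_ifs at this <;> omega
    have hz32 : z.1 3 (n - 2) = 0 := by
      have := hz2 3 (n - 2)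
      simp only [w2T] at this
      split_ifs at this <;> omega
    -- now z violates the triangle condition at j = 1, i' = 3
    have hc := z.2.2.2 1 3 (by omega) (by omega)
    rw [show Finset.Icc 1 3 = ({1, 2, 3} : Finset ℕ) from rfl,
        show Finset.Icc (1 + 1) 3 = ({2, 3} : Finset ℕ) from rfl] at hc
    rw [Finset.sum_insert (by decide), Finset.sum_insert (by decide),
        Finset.sum_singleton, Finset.sum_insert (by decide), Finset.sum_singleton] at hc
    have hnn : n - 1 - 1 = n - 2 := by omega
    rw [hnn] at hc
    omega
end

section
/- Under the bijection between permutations of {1,...,n} and boolean triangles with weakly decreasing rows, if the lowest one in the last diagonal (diagonal n-1, consisting of entries b_{i,n-1} for 1 ≤ i ≤ n-1) occurs in row ℓ-1 (and all entries below it in that diagonal are zero), then σ^{-1}(n) = ℓ, i.e., the one in the last column of the permutation matrix is in row ℓ. -/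
/-- In the boolean triangle of a permutation `σ` (row `i` has `c_i(σ)` zeros, so its
rightmost entry, on diagonal `n-1`, is a one iff `c_i(σ) = 0`), if the lowest one in
diagonal `n-1` is in row `ℓ-1` (rows `ℓ ≤ i ≤ n-1` all have `c_i(σ) ≥ 1`, and row `ℓ-1`
has `c_{ℓ-1}(σ) = 0` when `ℓ ≥ 2`), then `σ(ℓ) = n`, i.e. the one in the last column of
the permutation matrix is in row `ℓ`. -/
theorem stmt19 (n : ℕ) (hn : 1 ≤ n) (σ : Equiv.Perm (Fin n)) (ℓ : ℕ)
    (hl1 : 1 ≤ ℓ) (hln : ℓ ≤ n)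
    (h0 : 2 ≤ ℓ → cCount σ ⟨ℓ - 1, by omega⟩ = 0)
    (h1 : ∀ p : Fin n, ℓ ≤ p.val → 1 ≤ cCount σ p) :
    σ ⟨ℓ - 1, by omega⟩ = ⟨n - 1, by omega⟩ := by
  obtain ⟨p, hσp⟩ := σ.surjective ⟨n - 1, by omega⟩
  have htop : ∀ k : Fin n, (σ k).val ≤ n - 1 := fun k => by
    have := (σ k).isLt; omega
  -- p.val < ℓ
  have hplt : p.val < ℓ := by
    by_contra h
    push_neg at h
    have h1' := h1 p h
    rw [cCount, Nat.one_le_iff_ne_zero, ← Nat.pos_iff_ne_zero, Finset.card_pos] at h1'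
    obtain ⟨k, hk⟩ := h1'
    simp only [Finset.mem_filter] at hk
    have h2 := hk.2.2
    rw [hσp, Fin.lt_def] at h2
    have := htop k
    simp at h2
    omega
  -- p.val = ℓ - 1
  have hpeq : p.val = ℓ - 1 := by
    by_contra h
    have hpl : p.val < ℓ - 1 := by omega
    have hl2 : 2 ≤ ℓ := by omega
    have hc := h0 hl2
    rw [cCount, Finset.card_eq_zero, Finset.filter_eq_empty_iff] at hc
    refine hc (Finset.mem_univ p) ⟨Fin.lt_def.mpr (by simpa using hpl), ?_⟩
    have hne : σ (⟨ℓ - 1, by omega⟩ : Fin n) ≠ σ p := by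
      intro he
      have := σ.injective he
      have := congrArg Fin.val this
      simp at this; omega
    rw [hσp] at hne ⊢
    rw [Fin.lt_def]
    have := htop (⟨ℓ - 1, by omega⟩ : Fin n)
    have hvne : (σ (⟨ℓ - 1, by omega⟩ : Fin n)).val ≠ n - 1 := fun hv => hne (Fin.ext hv)
    simpa using by omega
  have : p = (⟨ℓ - 1, by omega⟩ : Fin n) := Fin.ext (by simp; omega)
  rw [← this, hσp]
end
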